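/- arXiv:1710.09502 — 5 statements merged into one kernel-verified Lean document; each statement's English description precedes it below -/
import Mathlib

section
/- Let f(x), g(x) ∈ F[x_1,...,x_n]^m be vectors of homogeneous polynomials of degrees d_f and d_g respectively. Then every matrix in the coefficient space of the matrix polynomial f(x) ⊗ g(x) has rank at most min(binomial(n+d_f-1, n-1), binomial(n+d_g-1, n-1)). -/
open MvPolynomial Finset Matrix

private lemma multichoose_le (n d : ℕ) :
    Nat.multichoose n d ≤ (n + d - 1).choose (n - 1) := by
  match n, d with
  | 0, 0 => simp [Nat.multichoose]
  | 0, d + 1 => simp [Nat.multichoose_zero_succ]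
  | n + 1, d =>
    rw [Nat.multichoose_eq]
    have h1 : n + 1 + d - 1 = n + d := by omega
    have h2 : n + 1 - 1 = n := by omega
    rw [h1, h2, Nat.choose_symm_add]

private lemma key_lemma (F : Type*) [Field F] (n m d : ℕ)
    (f g : Fin m → MvPolynomial (Fin n) F)
    (hf : ∀ i, (f i).IsHomogeneous d) :
    ∀ A ∈ Submodule.span F
      {A : Matrix (Fin m) (Fin m) F |
        ∃ e : Fin n →₀ ℕ, A = Matrix.of fun i j => MvPolynomial.coeff e (f i * g j)},
      A.rank ≤ (n + d - 1).choose (n - 1) := by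
  classical
  set S := {P : Fin n →₀ ℕ // Finsupp.degree P = d} with hS
  have eqv : Sym (Fin n) d ≃ S :=
    (Sym.equivNatSum (Fin n) d).trans (Equiv.subtypeEquivRight (fun P => by
      simp [Finsupp.degree, Finsupp.sum]; rfl))
  haveI : Fintype S := Fintype.ofEquiv _ eqv
  have hcard : Fintype.card S ≤ (n + d - 1).choose (n - 1) := by
    rw [← Fintype.card_congr eqv]
    rw [Sym.card_sym_eq_multichoose, Fintype.card_fin]
    exact multichoose_le n d
  set U : Matrix (Fin m) S F := fun i s => coeff s.1 (f i) with hU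
  set T : Matrix S (Fin m) F →ₗ[F] Matrix (Fin m) (Fin m) F :=
    { toFun := fun B => U * B
      map_add' := fun B C => Matrix.mul_add U B C
      map_smul' := fun c B => (Matrix.mul_smul U c B) } with hT
  have hspan : Submodule.span F
      {A : Matrix (Fin m) (Fin m) F |
        ∃ e : Fin n →₀ ℕ, A = Matrix.of fun i j => MvPolynomial.coeff e (f i * g j)}
      ≤ LinearMap.range T := by
    rw [Submodule.span_le]
    rintro A ⟨e, rfl⟩
    refine ⟨fun s j => if s.1 ≤ e then coeff (e - s.1) (g j) else 0, ?_⟩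
    ext i j
    simp only [hT, LinearMap.coe_mk, AddHom.coe_mk, Matrix.mul_apply, Matrix.of_apply]
    rw [MvPolynomial.coeff_mul]
    have hrestrict : ∑ x ∈ Finset.HasAntidiagonal.antidiagonal e, coeff x.1 (f i) * coeff x.2 (g j)
        = ∑ x ∈ (Finset.HasAntidiagonal.antidiagonal e).filter (fun x => Finsupp.degree x.1 = d),
            coeff x.1 (f i) * coeff x.2 (g j) := by
      rw [Finset.sum_filter_of_ne]
      intro x _ hx
      by_contra hdeg
      exact hx (by rw [(hf i).coeff_eq_zero hdeg, zero_mul])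
    have hR : ∑ s : S, U i s * (if s.1 ≤ e then coeff (e - s.1) (g j) else 0)
        = ∑ s ∈ Finset.univ.filter (fun s : S => s.1 ≤ e),
            coeff s.1 (f i) * coeff (e - s.1) (g j) := by
      rw [Finset.sum_filter]
      refine Finset.sum_congr rfl fun s _ => ?_
      simp only [hU, mul_ite, mul_zero]
    change (∑ s : S, U i s * (if s.1 ≤ e then coeff (e - s.1) (g j) else 0)) = _
    rw [hR, hrestrict]
    refine Finset.sum_bij' (fun (s : S) _ => ((s.1, e - s.1) : (Fin n →₀ ℕ) × (Fin n →₀ ℕ)))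
      (fun x hx => (⟨x.1, (Finset.mem_filter.mp hx).2⟩ : S)) ?_ ?_ ?_ ?_ ?_
    · intro s hs
      rw [Finset.mem_filter] at hs ⊢
      refine ⟨Finset.HasAntidiagonal.mem_antidiagonal.mpr (add_tsub_cancel_of_le hs.2), s.2⟩
    · intro x hx
      rw [Finset.mem_filter] at hx ⊢
      have := Finset.HasAntidiagonal.mem_antidiagonal.mp hx.1
      exact ⟨Finset.mem_univ _, le_iff_exists_add.mpr ⟨x.2, this.symm⟩⟩
    · intro s hs
      exact Subtype.ext rfl
    · intro x hx
      rw [Finset.mem_filter] at hx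
      have h1 := Finset.HasAntidiagonal.mem_antidiagonal.mp hx.1
      have : e - x.1 = x.2 := by rw [← h1, add_tsub_cancel_left]
      exact Prod.ext rfl this
    · intro s hs
      rfl
  intro A hA
  obtain ⟨B, rfl⟩ := hspan hA
  calc (T B).rank = (U * B).rank := rfl
    _ ≤ U.rank := Matrix.rank_mul_le_left U B
    _ ≤ Fintype.card S := Matrix.rank_le_card_width U
    _ ≤ _ := hcard

theorem stmt4 (F : Type*) [Field F] (n m df dg : ℕ)
    (f g : Fin m → MvPolynomial (Fin n) F)
    (hf : ∀ i, (f i).IsHomogeneous df) (hg : ∀ i, (g i).IsHomogeneous dg) :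
    ∀ A ∈ Submodule.span F
      {A : Matrix (Fin m) (Fin m) F |
        ∃ e : Fin n →₀ ℕ, A = Matrix.of fun i j => MvPolynomial.coeff e (f i * g j)},
      A.rank ≤ min ((n + df - 1).choose (n - 1)) ((n + dg - 1).choose (n - 1)) := by
  intro A hA
  refine le_min (key_lemma F n m df f g hf A hA) ?_
  rw [← Matrix.rank_transpose]
  refine key_lemma F n m dg g f hg (Matrix.transpose A) ?_
  have hmap : Aᵀ ∈ Submodule.map (Matrix.transposeLinearEquiv (Fin m) (Fin m) F F).toLinearMap
      (Submodule.span F {A : Matrix (Fin m) (Fin m) F |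
        ∃ e : Fin n →₀ ℕ, A = Matrix.of fun i j => MvPolynomial.coeff e (f i * g j)}) :=
    ⟨A, hA, rfl⟩
  rw [Submodule.map_span] at hmap
  refine Submodule.span_mono ?_ hmap
  rintro B ⟨C, ⟨e, rfl⟩, rfl⟩
  exact ⟨e, by ext i j; simp [Matrix.transposeLinearEquiv, mul_comm]⟩
end

section
/- Let variables be partitioned into d groups of n variables, let S_f ⊔ S_g = [d] be a partition with |S_f| = d_f and |S_g| = d_g, and let f(x), g(x) ∈ F[x]^m be vectors of homogeneous set-multilinear polynomials with respect to the variable groups indexed by S_f and S_g respectively. Then every matrix in the coefficient space of f(x) ⊗ g(x) has rank at most min(n^{d_f}, n^{d_g}). -/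
open Classical in
/-- The exponent vector of the set-multilinear monomial determined by a choice
function `φ` on the groups in `T`. -/
noncomputable def eT {d n : ℕ} (T : Finset (Fin d)) (φ : ↥T → Fin n) :
    Fin d × Fin n →₀ ℕ :=
  Finsupp.equivFunOnFinite.symm fun p =>
    if h : p.1 ∈ T then (if p.2 = φ ⟨p.1, h⟩ then 1 else 0) else 0

open Classical in
lemma eT_apply {d n : ℕ} (T : Finset (Fin d)) (φ : ↥T → Fin n) (p : Fin d × Fin n) :
    eT T φ p = if h : p.1 ∈ T then (if p.2 = φ ⟨p.1, h⟩ then 1 else 0) else 0 := rfl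

lemma eT_not_mem {d n : ℕ} (T : Finset (Fin d)) (φ : ↥T → Fin n) (p : Fin d × Fin n)
    (h : p.1 ∉ T) : eT T φ p = 0 := by
  rw [eT_apply]; simp [h]

private lemma sum_eq_one_fin {n : ℕ} (a : Fin n → ℕ) (h : ∑ j, a j = 1) :
    ∃ j0, a j0 = 1 ∧ ∀ j, j ≠ j0 → a j = 0 := by
  by_cases hex : ∃ j0, a j0 ≠ 0
  · obtain ⟨j0, hj0⟩ := hex
    have h' : a j0 + ∑ j ∈ Finset.univ.erase j0, a j = 1 := by
      rw [Finset.add_sum_erase _ _ (Finset.mem_univ j0)]; exact h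
    refine ⟨j0, by omega, fun j hj => ?_⟩
    have hz : ∑ j ∈ Finset.univ.erase j0, a j = 0 := by omega
    exact Finset.sum_eq_zero_iff.mp hz j (Finset.mem_erase.mpr ⟨hj, Finset.mem_univ j⟩)
  · push_neg at hex
    simp [hex] at h

/-- A set-multilinear exponent vector w.r.t. the groups in `T` is of the form `eT T φ`. -/
lemma exists_eT {d n : ℕ} (T : Finset (Fin d)) (e : Fin d × Fin n →₀ ℕ)
    (h1 : ∀ k ∈ T, (∑ j : Fin n, e (k, j)) = 1)
    (h2 : ∀ k ∉ T, ∀ j, e (k, j) = 0) :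
    ∃ φ : ↥T → Fin n, e = eT T φ := by
  have hch : ∀ k : ↥T, ∃ j0 : Fin n, e (k.1, j0) = 1 ∧ ∀ j, j ≠ j0 → e (k.1, j) = 0 :=
    fun k => sum_eq_one_fin _ (h1 k.1 k.2)
  choose φ hφ1 hφ2 using hch
  refine ⟨φ, Finsupp.ext fun p => ?_⟩
  rw [eT_apply]
  by_cases h : p.1 ∈ T
  · rw [dif_pos h]
    by_cases hj : p.2 = φ ⟨p.1, h⟩
    · rw [if_pos hj]
      have := hφ1 ⟨p.1, h⟩
      rw [← hj] at this
      exact this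
    · rw [if_neg hj]
      exact hφ2 ⟨p.1, h⟩ p.2 hj
  · rw [dif_neg h]
    exact h2 p.1 h p.2

/-- Left-and-right multiplication by fixed matrices, as a linear map. -/
def mulLR {F : Type*} [CommRing F] {α β γ δ : Type*} [Fintype β] [Fintype γ]
    (C : Matrix α β F) (D : Matrix γ δ F) :
    Matrix β γ F →ₗ[F] Matrix α δ F where
  toFun W := C * W * D
  map_add' W₁ W₂ := by rw [Matrix.mul_add, Matrix.add_mul]
  map_smul' c W := by rw [Matrix.mul_smul, Matrix.smul_mul]; rfl

lemma mulLR_apply {F : Type*} [CommRing F] {α β γ δ : Type*} [Fintype β] [Fintype γ]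
    (C : Matrix α β F) (D : Matrix γ δ F) (W : Matrix β γ F) :
    mulLR C D W = C * W * D := rfl

theorem stmt6 (F : Type*) [Field F] (n m d df dg : ℕ)
    (Sf : Finset (Fin d)) (hSf : Sf.card = df) (hSg : Sfᶜ.card = dg)
    (f g : Fin m → MvPolynomial (Fin d × Fin n) F)
    (hf : ∀ i, ∀ e ∈ (f i).support,
      (∀ k ∈ Sf, (∑ j : Fin n, e (k, j)) = 1) ∧ ∀ k ∉ Sf, ∀ j, e (k, j) = 0)
    (hg : ∀ i, ∀ e ∈ (g i).support,
      (∀ k ∉ Sf, (∑ j : Fin n, e (k, j)) = 1) ∧ ∀ k ∈ Sf, ∀ j, e (k, j) = 0) :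
    ∀ A ∈ Submodule.span F
      {A : Matrix (Fin m) (Fin m) F |
        ∃ e : Fin d × Fin n →₀ ℕ,
          A = Matrix.of fun i j => MvPolynomial.coeff e (f i * g j)},
      A.rank ≤ min (n ^ df) (n ^ dg) := by
  classical
  -- the coefficient matrices of `f` and `g`
  set C : Matrix (Fin m) (↥Sf → Fin n) F :=
    Matrix.of fun i φ => MvPolynomial.coeff (eT Sf φ) (f i) with hC
  set D : Matrix (↥(Sfᶜ) → Fin n) (Fin m) F :=
    Matrix.of fun ψ j => MvPolynomial.coeff (eT Sfᶜ ψ) (g j) with hD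
  -- every generator lies in the range of `W ↦ C * W * D`
  have hgen : {A : Matrix (Fin m) (Fin m) F |
      ∃ e : Fin d × Fin n →₀ ℕ,
        A = Matrix.of fun i j => MvPolynomial.coeff e (f i * g j)} ⊆
      (LinearMap.range (mulLR C D) : Submodule F (Matrix (Fin m) (Fin m) F)) := by
    rintro A ⟨e, rfl⟩
    set e1 : Fin d × Fin n →₀ ℕ := e.filter (fun p => p.1 ∈ Sf) with he1
    set e2 : Fin d × Fin n →₀ ℕ := e.filter (fun p => ¬ p.1 ∈ Sf) with he2
    have hsplit : e1 + e2 = e := Finsupp.filter_pos_add_filter_neg e _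
    have he1' : ∀ p : Fin d × Fin n, p.1 ∈ Sf → e1 p = e p := by
      intro p hp; rw [he1]; simp [Finsupp.filter_apply, hp]
    have he1'' : ∀ p : Fin d × Fin n, p.1 ∉ Sf → e1 p = 0 := by
      intro p hp; rw [he1]; simp [Finsupp.filter_apply, hp]
    have he2' : ∀ p : Fin d × Fin n, p.1 ∉ Sf → e2 p = e p := by
      intro p hp; rw [he2]; simp [Finsupp.filter_apply, hp]
    have he2'' : ∀ p : Fin d × Fin n, p.1 ∈ Sf → e2 p = 0 := by
      intro p hp; rw [he2]; simp [Finsupp.filter_apply, hp]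
    -- coefficient factorization
    have key : ∀ i j, MvPolynomial.coeff e (f i * g j) =
        MvPolynomial.coeff e1 (f i) * MvPolynomial.coeff e2 (g j) := by
      intro i j
      rw [MvPolynomial.coeff_mul]
      refine Finset.sum_eq_single_of_mem (e1, e2)
        (Finset.HasAntidiagonal.mem_antidiagonal.mpr hsplit) ?_
      rintro ⟨b1, b2⟩ hb hne
      have hbe : b1 + b2 = e := Finset.HasAntidiagonal.mem_antidiagonal.mp hb
      by_contra h0
      rw [mul_eq_zero, not_or] at h0
      have hb1 := (hf i) b1 (MvPolynomial.mem_support_iff.mpr h0.1)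
      have hb2 := (hg j) b2 (MvPolynomial.mem_support_iff.mpr h0.2)
      apply hne
      have hb1e : b1 = e1 := by
        ext p
        obtain ⟨k, jj⟩ := p
        by_cases hk : k ∈ Sf
        · have hsum : b1 (k, jj) + b2 (k, jj) = e (k, jj) := by
            rw [← hbe]; rfl
          rw [hb2.2 k hk jj] at hsum
          rw [he1' (k, jj) hk]
          omega
        · rw [hb1.2 k hk jj, he1'' (k, jj) hk]
      have hb2e : b2 = e2 := by
        ext p
        obtain ⟨k, jj⟩ := p
        by_cases hk : k ∈ Sf
        · rw [hb2.2 k hk jj, he2'' (k, jj) hk]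
        · have hsum : b1 (k, jj) + b2 (k, jj) = e (k, jj) := by
            rw [← hbe]; rfl
          rw [hb1.2 k hk jj] at hsum
          rw [he2' (k, jj) hk]
          omega
      exact Prod.ext hb1e hb2e
    by_cases hdec : ∃ (φ : ↥Sf → Fin n) (ψ : ↥(Sfᶜ) → Fin n), eT Sf φ + eT Sfᶜ ψ = e
    · obtain ⟨φ0, ψ0, hφψ⟩ := hdec
      -- `eT Sf φ0 = e1` and `eT Sfᶜ ψ0 = e2`
      have hφe : eT Sf φ0 = e1 := by
        ext p
        by_cases hp : p.1 ∈ Sf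
        · have hsum : eT Sf φ0 p + eT Sfᶜ ψ0 p = e p := by rw [← hφψ]; rfl
          rw [eT_not_mem Sfᶜ ψ0 p (by simpa using hp)] at hsum
          rw [he1' p hp]
          omega
        · rw [eT_not_mem Sf φ0 p hp, he1'' p hp]
      have hψe : eT Sfᶜ ψ0 = e2 := by
        ext p
        by_cases hp : p.1 ∈ Sf
        · rw [eT_not_mem Sfᶜ ψ0 p (by simpa using hp), he2'' p hp]
        · have hsum : eT Sf φ0 p + eT Sfᶜ ψ0 p = e p := by rw [← hφψ]; rfl
          rw [eT_not_mem Sf φ0 p hp] at hsum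
          rw [he2' p hp]
          omega
      refine ⟨Matrix.of fun φ ψ => if φ = φ0 then (if ψ = ψ0 then (1 : F) else 0) else 0, ?_⟩
      rw [mulLR_apply]
      ext i j
      rw [Matrix.of_apply, key i j]
      simp [Matrix.mul_apply, mul_ite, ite_mul, mul_zero, zero_mul, mul_one,
        Finset.sum_mul, hC, hD, hφe, hψe]
    · -- the coefficient matrix is zero
      refine ⟨0, ?_⟩
      rw [mulLR_apply, Matrix.mul_zero, Matrix.zero_mul]
      ext i j
      rw [Matrix.of_apply, key i j, Matrix.zero_apply]
      symm
      by_contra h0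
      rw [mul_eq_zero, not_or] at h0
      have hb1 := (hf i) e1 (MvPolynomial.mem_support_iff.mpr h0.1)
      have hb2 := (hg j) e2 (MvPolynomial.mem_support_iff.mpr h0.2)
      obtain ⟨φ, hφ⟩ := exists_eT Sf e1 hb1.1 hb1.2
      obtain ⟨ψ, hψ⟩ := exists_eT Sfᶜ e2
        (fun k hk => hb2.1 k (by simpa using hk))
        (fun k hk => hb2.2 k (by simpa using hk))
      exact hdec ⟨φ, ψ, by rw [← hφ, ← hψ, hsplit]⟩
  -- conclude
  intro A hA
  have hA' : A ∈ LinearMap.range (mulLR C D) :=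
    Submodule.span_le.mpr hgen hA
  obtain ⟨W, rfl⟩ := hA'
  rw [mulLR_apply]
  refine le_min ?_ ?_
  · calc (C * W * D).rank ≤ (C * W).rank := Matrix.rank_mul_le_left _ _
    _ ≤ C.rank := Matrix.rank_mul_le_left _ _
    _ ≤ Fintype.card (↥Sf → Fin n) := Matrix.rank_le_card_width _
    _ = n ^ df := by simp [hSf]
  · calc (C * W * D).rank ≤ D.rank := Matrix.rank_mul_le_right _ _
    _ ≤ Fintype.card (↥(Sfᶜ) → Fin n) := Matrix.rank_le_card_height _
    _ = n ^ dg := by rw [← hSg]; simp [Finset.card_compl]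
end

section
/- Let M(x) ∈ Mat_m(F[x_1,...,x_n]) be a matrix whose entries are homogeneous polynomials of degree d over an algebraically closed field F of characteristic zero. If the rank of M(x) over F(x_1,...,x_n) equals r, then there exist vectors of polynomials f_1(x),...,f_r(x), g_1(x),...,g_r(x) ∈ F[x]^m such that M(x) = ∑_{i=1}^r H_d[f_i(x) ⊗ g_i(x)], where H_d denotes taking the degree-d homogeneous component entrywise. -/
open MvPolynomial

namespace Stmt8Aux

variable {F : Type*} [CommRing F] {n : ℕ}

private lemma degree_add (a b : Fin n →₀ ℕ) :
    Finsupp.degree (a + b) = Finsupp.degree a + Finsupp.degree b := by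
  simp [Finsupp.degree_eq_weight_one, map_add]

private lemma degree_single (i : Fin n) (k : ℕ) :
    Finsupp.degree (Finsupp.single i k) = k := by
  rcases eq_or_ne k 0 with rfl | h
  · simp [Finsupp.degree]
  · exact Finsupp.degree_single i k

/-- all monomials in support have degree < k -/
def DegLT (k : ℕ) (w : MvPolynomial (Fin n) F) : Prop :=
  ∀ μ ∈ w.support, Finsupp.degree μ < k

/-- all monomials in support have degree ≤ k -/
def DegLE (k : ℕ) (w : MvPolynomial (Fin n) F) : Prop :=
  ∀ μ ∈ w.support, Finsupp.degree μ ≤ k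

/-- all monomials in support have degree ≥ k -/
def DegGE (k : ℕ) (w : MvPolynomial (Fin n) F) : Prop :=
  ∀ μ ∈ w.support, k ≤ Finsupp.degree μ

private lemma DegLT.degLE {k : ℕ} {w : MvPolynomial (Fin n) F} (h : DegLT k w) : DegLE k w :=
  fun μ hμ => (h μ hμ).le

private lemma degLT_zero (k : ℕ) : DegLT k (0 : MvPolynomial (Fin n) F) := by
  intro μ hμ; simp at hμ

private lemma DegLT.add {k : ℕ} {u v : MvPolynomial (Fin n) F} (hu : DegLT k u)
    (hv : DegLT k v) : DegLT k (u + v) := by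
  classical
  intro μ hμ
  rcases Finset.mem_union.mp (MvPolynomial.support_add hμ) with h | h
  · exact hu μ h
  · exact hv μ h

private lemma DegLE.mul_degLT {a b : ℕ} {u v : MvPolynomial (Fin n) F}
    (hu : DegLE a u) (hv : DegLT b v) : DegLT (a + b) (u * v) := by
  classical
  intro μ hμ
  obtain ⟨μ₁, h₁, μ₂, h₂, rfl⟩ := Finset.mem_add.mp (MvPolynomial.support_mul u v hμ)
  rw [degree_add]
  exact add_lt_add_of_le_of_lt (hu μ₁ h₁) (hv μ₂ h₂)

private lemma DegLT.mul_degLE {a b : ℕ} {u v : MvPolynomial (Fin n) F}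
    (hu : DegLT a u) (hv : DegLE b v) : DegLT (a + b) (u * v) := by
  classical
  intro μ hμ
  obtain ⟨μ₁, h₁, μ₂, h₂, rfl⟩ := Finset.mem_add.mp (MvPolynomial.support_mul u v hμ)
  rw [degree_add]
  exact add_lt_add_of_lt_of_le (hu μ₁ h₁) (hv μ₂ h₂)

private lemma DegGE.mul {a b : ℕ} {u v : MvPolynomial (Fin n) F}
    (hu : DegGE a u) (hv : DegGE b v) : DegGE (a + b) (u * v) := by
  classical
  intro μ hμ
  obtain ⟨μ₁, h₁, μ₂, h₂, rfl⟩ := Finset.mem_add.mp (MvPolynomial.support_mul u v hμ)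
  rw [degree_add]
  exact add_le_add (hu μ₁ h₁) (hv μ₂ h₂)

private lemma degLE_monomial (μ : Fin n →₀ ℕ) (c : F) :
    DegLE (Finsupp.degree μ) (monomial μ c) := by
  intro ν hν
  classical
  rcases Finset.mem_singleton.mp (MvPolynomial.support_monomial_subset hν) with rfl
  exact le_rfl

variable (a : Fin n → F)

private lemma exists_err_pow (i : Fin n) (k : ℕ) :
    ∃ E : MvPolynomial (Fin n) F, (X i + C (a i)) ^ k = X i ^ k + E ∧ DegLT k E := by
  induction k with
  | zero => exact ⟨0, by simp, degLT_zero 0⟩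
  | succ k ih =>
    obtain ⟨E, hE, hdeg⟩ := ih
    refine ⟨C (a i) * X i ^ k + (X i + C (a i)) * E, by rw [pow_succ, hE]; ring, ?_⟩
    apply DegLT.add
    · intro ν hν
      have h1 : DegLE k (C (a i) * X i ^ k) := by
        rw [MvPolynomial.C_mul_X_pow_eq_monomial]
        have := degLE_monomial (Finsupp.single i k) (a i)
        rwa [degree_single] at this
      exact lt_of_le_of_lt (h1 ν hν) (Nat.lt_succ_self k)
    · have h2 : DegLE 1 (X i + C (a i) : MvPolynomial (Fin n) F) := by
        classical
        intro ν hν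
        rcases Finset.mem_union.mp (MvPolynomial.support_add hν) with h | h
        · rw [MvPolynomial.X, ← MvPolynomial.single_eq_monomial] at h
          rcases Finset.mem_singleton.mp (MvPolynomial.support_monomial_subset h) with rfl
          rw [degree_single]
        · rw [MvPolynomial.C_apply] at h
          rcases Finset.mem_singleton.mp (MvPolynomial.support_monomial_subset h) with rfl
          simp [Finsupp.degree]
      have := h2.mul_degLT hdeg
      rwa [Nat.add_comm 1 k] at this

private lemma exists_err (μ : Fin n →₀ ℕ) (c : F) :
    ∃ E : MvPolynomial (Fin n) F,
      aeval (fun i => X i + C (a i)) (monomial μ c) = monomial μ c + E ∧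
        DegLT (Finsupp.degree μ) E := by
  induction μ using Finsupp.induction generalizing c with
  | zero =>
    refine ⟨0, ?_, degLT_zero 0⟩
    rw [MvPolynomial.monomial_zero']
    simp [MvPolynomial.aeval_C, MvPolynomial.algebraMap_eq]
  | single_add i k ν hi hk ih =>
    obtain ⟨E₂, hE₂, hd₂⟩ := ih c
    obtain ⟨E₁, hE₁, hd₁⟩ := exists_err_pow a i k
    have hmon : (monomial (Finsupp.single i k + ν) c : MvPolynomial (Fin n) F)
        = X i ^ k * monomial ν c := by
      rw [MvPolynomial.X_pow_eq_monomial, MvPolynomial.monomial_mul, one_mul]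
    refine ⟨X i ^ k * E₂ + E₁ * monomial ν c + E₁ * E₂, ?_, ?_⟩
    · rw [hmon]
      simp only [map_mul, map_pow, MvPolynomial.aeval_X]
      rw [hE₂, hE₁]
      ring
    · rw [degree_add, degree_single]
      have hX : DegLE k (X i ^ k : MvPolynomial (Fin n) F) := by
        rw [MvPolynomial.X_pow_eq_monomial]
        have := degLE_monomial (Finsupp.single i k) (1 : F)
        rwa [degree_single] at this
      apply DegLT.add
      apply DegLT.add
      · exact hX.mul_degLT hd₂
      · exact hd₁.mul_degLE (degLE_monomial ν c)
      · exact hd₁.mul_degLE hd₂.degLE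

/-- key translation lemma: taking degree-d part of p(x + a) recovers homogeneous p -/
private lemma homogeneousComponent_aeval_add {d : ℕ} {p : MvPolynomial (Fin n) F}
    (hp : p.IsHomogeneous d) :
    homogeneousComponent d (aeval (fun i => X i + C (a i)) p) = p := by
  have hps := MvPolynomial.support_sum_monomial_coeff p
  conv_lhs => rw [← hps, map_sum, map_sum]
  conv_rhs => rw [← hps]
  apply Finset.sum_congr rfl
  intro μ hμ
  have hdeg : Finsupp.degree μ = d := by
    have h := hp (MvPolynomial.mem_support_iff.mp hμ)
    rw [Finsupp.degree_eq_weight_one]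
    exact h
  obtain ⟨E, hE, hd⟩ := exists_err a μ (coeff μ p)
  rw [hE, map_add]
  have h1 : homogeneousComponent d (monomial μ (coeff μ p)) = monomial μ (coeff μ p) := by
    have hmem : (monomial μ (coeff μ p)) ∈ homogeneousSubmodule (Fin n) F d :=
      MvPolynomial.isHomogeneous_monomial _ hdeg
    have := MvPolynomial.homogeneousComponent_of_mem hmem (m := d)
    rw [this, if_pos rfl]
  have h2 : homogeneousComponent d E = 0 := by
    apply MvPolynomial.homogeneousComponent_eq_zero'
    intro ν hν
    rw [hdeg] at hd
    exact (hd ν hν).ne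
  rw [h1, h2, add_zero]

private lemma homogeneousComponent_high_vanish {d : ℕ} {q0 h : MvPolynomial (Fin n) F}
    (hq : constantCoeff q0 = 0) :
    homogeneousComponent d (q0 ^ (d + 1) * h) = 0 := by
  have hge1 : DegGE 1 q0 := by
    intro μ hμ
    by_contra hlt
    push_neg at hlt
    have hd0 : Finsupp.degree μ = 0 := Nat.lt_one_iff.mp hlt
    have : μ = 0 := (Finsupp.degree_eq_zero_iff μ).mp hd0
    subst this
    exact MvPolynomial.mem_support_iff.mp hμ hq
  have hpow : ∀ k, DegGE k ((q0 : MvPolynomial (Fin n) F) ^ k) := by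
    intro k
    induction k with
    | zero => intro μ hμ; exact Nat.zero_le _
    | succ k ih =>
      rw [pow_succ]
      exact ih.mul hge1
  have hfull : DegGE (d + 1) (q0 ^ (d + 1) * h) := by
    have h0 : DegGE 0 h := fun μ _ => Nat.zero_le _
    have := (hpow (d + 1)).mul h0
    rwa [Nat.add_zero] at this
  apply MvPolynomial.homogeneousComponent_eq_zero'
  intro ν hν
  exact Nat.ne_of_gt (lt_of_lt_of_le (Nat.lt_succ_self d) (hfull ν hν))

private lemma constantCoeff_aeval_add (w : MvPolynomial (Fin n) F) :
    constantCoeff (aeval (fun i => X i + C (a i)) w) = eval a w := by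
  have hhom : (constantCoeff.comp ((aeval (fun i => X i + C (a i)) :
      MvPolynomial (Fin n) F →ₐ[F] MvPolynomial (Fin n) F) : MvPolynomial (Fin n) F →+*
        MvPolynomial (Fin n) F)) = (eval a : MvPolynomial (Fin n) F →+* F) := by
    apply MvPolynomial.ringHom_ext
    · intro c
      simp [MvPolynomial.aeval_C, MvPolynomial.algebraMap_eq]
    · intro i
      simp
  exact DFunLike.congr_fun hhom w

end Stmt8Aux

set_option maxHeartbeats 1000000 in
set_option synthInstance.maxHeartbeats 1000000 in
open Stmt8Aux in
theorem stmt8 (F : Type*) [Field F] [IsAlgClosed F] [CharZero F] (n m d r : ℕ)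
    (M : Matrix (Fin m) (Fin m) (MvPolynomial (Fin n) F))
    (hM : ∀ p q, (M p q).IsHomogeneous d)
    (hr : (M.map (algebraMap (MvPolynomial (Fin n) F)
      (FractionRing (MvPolynomial (Fin n) F)))).rank = r) :
    ∃ f g : Fin r → Fin m → MvPolynomial (Fin n) F,
      M = ∑ i, Matrix.of fun p q =>
        MvPolynomial.homogeneousComponent d (f i p * g i q) := by
  classical
  have hfr : Module.finrank (FractionRing (MvPolynomial (Fin n) F))
      (LinearMap.range (M.map (algebraMap (MvPolynomial (Fin n) F)
        (FractionRing (MvPolynomial (Fin n) F)))).mulVecLin) = r := hr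
  let b := Module.finBasisOfFinrankEq (FractionRing (MvPolynomial (Fin n) F))
    (LinearMap.range (M.map (algebraMap (MvPolynomial (Fin n) F)
        (FractionRing (MvPolynomial (Fin n) F)))).mulVecLin) hfr
  have hcolmem : ∀ q : Fin m, (fun p => (M.map (algebraMap (MvPolynomial (Fin n) F)
      (FractionRing (MvPolynomial (Fin n) F)))) p q) ∈
      LinearMap.range (M.map (algebraMap (MvPolynomial (Fin n) F)
        (FractionRing (MvPolynomial (Fin n) F)))).mulVecLin := by
    intro q
    exact ⟨Pi.single q 1, by ext p; simp [Matrix.mulVecLin_apply]⟩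
  let w := fun q => (⟨_, hcolmem q⟩ : LinearMap.range (M.map (algebraMap (MvPolynomial (Fin n) F)
        (FractionRing (MvPolynomial (Fin n) F)))).mulVecLin)
  have key : ∀ p q, (M.map (algebraMap (MvPolynomial (Fin n) F)
      (FractionRing (MvPolynomial (Fin n) F)))) p q
      = ∑ i, (b.repr (w q) i) * ((b i : Fin m → FractionRing (MvPolynomial (Fin n) F)) p) := by
    intro p q
    have h2 := congrArg Subtype.val (b.sum_repr (w q))
    rw [AddSubmonoidClass.coe_finset_sum] at h2
    have h4 := congrFun h2 p
    simp only [Finset.sum_apply, SetLike.val_smul, Pi.smul_apply, smul_eq_mul] at h4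
    exact h4.symm
  -- Step B: common denominator
  set ε : ((Fin m × Fin r) ⊕ (Fin r × Fin m)) → FractionRing (MvPolynomial (Fin n) F) :=
    Sum.elim (fun z => (b z.2 : Fin m → FractionRing (MvPolynomial (Fin n) F)) z.1)
      (fun z => b.repr (w z.2) z.1) with hε
  obtain ⟨c, hc⟩ := IsLocalization.exist_integer_multiples_of_finite
    (nonZeroDivisors (MvPolynomial (Fin n) F)) ε
  have hPm0 : ∀ (p : Fin m) (i : Fin r), ∃ y : MvPolynomial (Fin n) F,
      algebraMap (MvPolynomial (Fin n) F) (FractionRing (MvPolynomial (Fin n) F)) y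
        = algebraMap _ _ (c : MvPolynomial (Fin n) F) *
          (b i : Fin m → FractionRing (MvPolynomial (Fin n) F)) p := by
    intro p i
    obtain ⟨y, hy⟩ := hc (Sum.inl (p, i))
    exact ⟨y, by simpa [hε, Algebra.smul_def] using hy⟩
  have hCm0 : ∀ (i : Fin r) (q : Fin m), ∃ y : MvPolynomial (Fin n) F,
      algebraMap (MvPolynomial (Fin n) F) (FractionRing (MvPolynomial (Fin n) F)) y
        = algebraMap _ _ (c : MvPolynomial (Fin n) F) * b.repr (w q) i := by
    intro i q
    obtain ⟨y, hy⟩ := hc (Sum.inr (i, q))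
    exact ⟨y, by simpa [hε, Algebra.smul_def] using hy⟩
  choose Pm hPm using hPm0
  choose Cm hCm using hCm0
  obtain ⟨D, hDdef⟩ : ∃ D : MvPolynomial (Fin n) F,
      D = (c : MvPolynomial (Fin n) F) * (c : MvPolynomial (Fin n) F) := ⟨_, rfl⟩
  have hD' : D ≠ 0 → D ≠ 0 := id
  have hcne : (c : MvPolynomial (Fin n) F) ≠ 0 := nonZeroDivisors.ne_zero c.2
  have hD : D ≠ 0 := hDdef ▸ mul_ne_zero hcne hcne
  have hinj : Function.Injective (algebraMap (MvPolynomial (Fin n) F)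
      (FractionRing (MvPolynomial (Fin n) F))) := IsFractionRing.injective _ _
  have hDM : ∀ p q, D * M p q = ∑ i, Pm p i * Cm i q := by
    intro p q
    apply hinj
    rw [map_mul, map_sum]
    have hApq : algebraMap (MvPolynomial (Fin n) F) (FractionRing (MvPolynomial (Fin n) F))
        (M p q) = (M.map (algebraMap (MvPolynomial (Fin n) F)
          (FractionRing (MvPolynomial (Fin n) F)))) p q := rfl
    rw [hApq, key p q, Finset.mul_sum]
    apply Finset.sum_congr rfl
    intro i _
    rw [hDdef]
    simp only [map_mul]
    rw [hPm, hCm]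
    ring
  -- Step C: point a with D(a) ≠ 0
  have hex : ∃ a : Fin n → F, eval a D ≠ 0 := by
    by_contra h
    push_neg at h
    exact hD (MvPolynomial.funext fun x => by rw [h x, map_zero])
  obtain ⟨a, ha⟩ := hex
  -- Step D: translation and truncated geometric series
  set τ : MvPolynomial (Fin n) F →ₐ[F] MvPolynomial (Fin n) F :=
    aeval (fun i => X i + C (a i)) with hτ
  obtain ⟨s, hs⟩ : ∃ s : F, s = eval a D := ⟨_, rfl⟩
  have hsne : s ≠ 0 := hs ▸ ha
  obtain ⟨q0, hq0def⟩ : ∃ q0 : MvPolynomial (Fin n) F,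
      q0 = 1 - C s⁻¹ * τ D := ⟨_, rfl⟩
  have hq0 : constantCoeff q0 = 0 := by
    rw [hq0def, map_sub, map_one, map_mul, constantCoeff_C, hτ,
      constantCoeff_aeval_add, ← hs, inv_mul_cancel₀ hsne, sub_self]
  obtain ⟨T, hT⟩ : ∃ T : MvPolynomial (Fin n) F,
      T = ∑ k ∈ Finset.range (d + 1), q0 ^ k := ⟨_, rfl⟩
  have hgeom : (C s⁻¹ * τ D) * T = 1 - q0 ^ (d + 1) := by
    have h1 : (C s⁻¹ * τ D : MvPolynomial (Fin n) F) = 1 - q0 := by rw [hq0def]; ring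
    rw [h1, hT]
    have hg := geom_sum_mul q0 (d + 1)
    linear_combination -hg
  -- Step E: the decomposition
  refine ⟨fun i p => C s⁻¹ * T * τ (Pm p i), fun i q => τ (Cm i q), ?_⟩
  funext p q
  rw [Matrix.sum_apply]
  simp only [Matrix.of_apply]
  rw [← map_sum (MvPolynomial.homogeneousComponent d)]
  have hsum : (∑ i, C s⁻¹ * T * τ (Pm p i) * τ (Cm i q))
      = τ (M p q) - q0 ^ (d + 1) * τ (M p q) := by
    have h0 : ∀ i : Fin r, C s⁻¹ * T * τ (Pm p i) * τ (Cm i q)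
        = C s⁻¹ * T * τ (Pm p i * Cm i q) := by
      intro i
      rw [map_mul]
      ring
    have h1 : (∑ i, C s⁻¹ * T * τ (Pm p i) * τ (Cm i q))
        = C s⁻¹ * T * τ (∑ i, Pm p i * Cm i q) := by
      rw [Finset.sum_congr rfl fun i _ => h0 i, map_sum, Finset.mul_sum]
    rw [h1, ← hDM, map_mul]
    calc C s⁻¹ * T * (τ D * τ (M p q))
        = ((C s⁻¹ * τ D) * T) * τ (M p q) := by ring
      _ = (1 - q0 ^ (d + 1)) * τ (M p q) := by rw [hgeom]
      _ = τ (M p q) - q0 ^ (d + 1) * τ (M p q) := by ring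
  rw [hsum, map_sub, homogeneousComponent_high_vanish hq0, hτ,
    homogeneousComponent_aeval_add a (hM p q), sub_zero]
end

section
/- Let M(x) ∈ Mat_m(F[x_1,...,x_n]) be a matrix whose entries are homogeneous polynomials of degree d over a field F of characteristic zero. If the symbolic rank of M(x) over F(x) is at most r, then M(x) can be written as a sum of at most r(d+1) rank-one matrices u(x) ⊗ v(x), where in each term u(x), v(x) ∈ F[x]^m are vectors of homogeneous polynomials whose degrees sum to d. -/
open MvPolynomial Finset

section Aux

variable {σ : Type*} {R : Type*} [CommRing R]

lemma degree_add'' (a b : σ →₀ ℕ) : (a + b).degree = a.degree + b.degree := by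
  simp only [Finsupp.degree_eq_weight_one]
  exact map_add _ a b

lemma hc_mul (f g : MvPolynomial σ R) (e : ℕ) :
    homogeneousComponent e (f * g) =
      ∑ p ∈ Finset.HasAntidiagonal.antidiagonal e,
        homogeneousComponent p.1 f * homogeneousComponent p.2 g := by
  ext μ
  classical
  simp only [coeff_homogeneousComponent, MvPolynomial.coeff_sum, coeff_mul,
    Finset.sum_ite_eq]
  rw [Finset.sum_comm]
  have : ∀ st ∈ Finset.HasAntidiagonal.antidiagonal μ,
      (∑ ab ∈ Finset.HasAntidiagonal.antidiagonal e,
        (if (st : (σ →₀ ℕ) × (σ →₀ ℕ)).1.degree = ab.1 then coeff st.1 f else 0) *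
        (if st.2.degree = ab.2 then coeff st.2 g else 0)) =
      if μ.degree = e then coeff st.1 f * coeff st.2 g else 0 := by
    intro st hst
    have hdeg : st.1.degree + st.2.degree = μ.degree := by
      rw [Finset.HasAntidiagonal.mem_antidiagonal] at hst
      rw [← hst]
      exact (degree_add'' st.1 st.2).symm
    by_cases h : μ.degree = e
    · rw [if_pos h, Finset.sum_eq_single (st.1.degree, st.2.degree)]
      · simp
      · intro ab hab hne
        by_cases h1 : st.1.degree = ab.1
        · have h2 : st.2.degree ≠ ab.2 := by
            intro h2; exact (hne (by rw [Prod.ext_iff]; exact ⟨h1.symm, h2.symm⟩ )).elim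
          simp [h1, h2]
        · simp [h1]
      · intro hmem
        exact absurd (by rw [Finset.HasAntidiagonal.mem_antidiagonal]; rw [hdeg]; exact h) hmem
    · rw [if_neg h]
      apply Finset.sum_eq_zero
      intro ab hab
      rw [Finset.HasAntidiagonal.mem_antidiagonal] at hab
      by_cases h1 : st.1.degree = ab.1
      · have h2 : st.2.degree ≠ ab.2 := by
          intro h2
          apply h
          rw [← hdeg, h1, h2, hab]
        simp [h2]
      · simp [h1]
  rw [Finset.sum_congr rfl this]
  by_cases h : μ.degree = e
  · simp [h]
  · simp [h]

lemma hc_of_isHomogeneous {f : MvPolynomial σ R} {e c : ℕ} (hf : f.IsHomogeneous e) :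
    homogeneousComponent c f = if c = e then f else 0 :=
  homogeneousComponent_of_mem ((mem_homogeneousSubmodule e f).2 hf)

lemma ext_hc {f g : MvPolynomial σ R}
    (h : ∀ e, homogeneousComponent e f = homogeneousComponent e g) : f = g := by
  ext μ
  have := congrArg (coeff μ) (h μ.degree)
  simpa [coeff_homogeneousComponent] using this

lemma tdeg_hc_le (f : MvPolynomial σ R) (e : ℕ) :
    (homogeneousComponent e f).totalDegree ≤ e :=
  (homogeneousComponent_isHomogeneous e f).totalDegree_le

lemma hc_zero_of_tdeg_le {f : MvPolynomial σ R} {k e : ℕ} (h : f.totalDegree ≤ k)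
    (he : k < e) : homogeneousComponent e f = 0 :=
  homogeneousComponent_eq_zero _ _ (lt_of_le_of_lt h he)

/-- Translation by `β` as an algebra hom. -/
noncomputable def tr (β : σ → R) : MvPolynomial σ R →ₐ[R] MvPolynomial σ R :=
  aeval (fun i => X i + C (β i))

lemma tr_tr (β : σ → R) (f : MvPolynomial σ R) : tr (-β) (tr β f) = f := by
  have : (tr (-β)).comp (tr β) = AlgHom.id R (MvPolynomial σ R) := by
    apply MvPolynomial.algHom_ext
    intro i
    simp [tr, aeval_X, map_add]
  calc tr (-β) (tr β f) = ((tr (-β)).comp (tr β)) f := rfl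
    _ = f := by rw [this]; rfl

lemma tdeg_tr_le (β : σ → R) (f : MvPolynomial σ R) :
    (tr β f).totalDegree ≤ f.totalDegree := by
  classical
  conv_lhs => rw [f.as_sum]
  rw [map_sum]
  apply le_trans (totalDegree_finset_sum _ _)
  apply Finset.sup_le
  intro s hs
  have h1 : (tr β (monomial s (coeff s f))).totalDegree ≤ s.degree := by
    rw [tr, aeval_monomial]
    apply le_trans (totalDegree_mul _ _)
    have h2 : (algebraMap R (MvPolynomial σ R)) (coeff s f) = C (coeff s f) := rfl
    rw [h2, totalDegree_C, zero_add]
    rw [Finsupp.prod]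
    apply le_trans (totalDegree_finset_prod _ _)
    have h3 : ∀ i ∈ s.support, ((X i + C (β i) : MvPolynomial σ R) ^ s i).totalDegree ≤ s i := by
      intro i _
      apply le_trans (totalDegree_pow _ _)
      have h4 : (X i + C (β i) : MvPolynomial σ R).totalDegree ≤ 1 := by
        apply le_trans (totalDegree_add _ _)
        apply max_le
        · apply le_trans (totalDegree_monomial_le _ _)
          simp [Finsupp.degree_eq_weight_one]
        · simp [totalDegree_C]
      calc s i * (X i + C (β i) : MvPolynomial σ R).totalDegree ≤ s i * 1 :=
            Nat.mul_le_mul_left _ h4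
        _ = s i := Nat.mul_one _
    apply le_trans (Finset.sum_le_sum h3)
    rw [Finsupp.degree]
    exact le_rfl
  exact le_trans h1 (le_totalDegree hs)

lemma coeff_zero_tr (β : σ → R) (f : MvPolynomial σ R) :
    coeff 0 (tr β f) = eval β f := by
  have h0 : (eval (0 : σ → R)).comp (tr β).toRingHom = eval β := by
    apply MvPolynomial.ringHom_ext
    · intro a; simp [tr]
    · intro i; simp [tr]
  have := congrFun (congrArg (fun (g : MvPolynomial σ R →+* R) => (g : MvPolynomial σ R → R)) h0) f
  simp only [RingHom.coe_comp, Function.comp_apply] at this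
  rw [← this, ← constantCoeff_eq, ← eval_zero]; rfl

end Aux

section Field

variable {σ : Type*} {F : Type*} [Field F]

lemma trunc_inv (g : MvPolynomial σ F) (hg : coeff 0 g ≠ 0) (d : ℕ) :
    ∃ H : MvPolynomial σ F, ∀ e ≤ d,
      homogeneousComponent e (g * H) = if e = 0 then 1 else 0 := by
  induction d with
  | zero =>
    refine ⟨C (coeff 0 g)⁻¹, ?_⟩
    intro e he
    rw [Nat.le_zero] at he
    subst he
    rw [homogeneousComponent_zero, if_pos rfl]
    have : coeff 0 (g * C (coeff 0 g)⁻¹) = coeff 0 g * (coeff 0 g)⁻¹ := by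
      rw [mul_comm, coeff_C_mul, mul_comm]
    rw [this, mul_inv_cancel₀ hg, map_one]
  | succ k ih =>
    obtain ⟨H, hH⟩ := ih
    set c := coeff 0 g with hc
    set hk := homogeneousComponent (k + 1) (g * H) with hhk
    refine ⟨H - C c⁻¹ * hk, ?_⟩
    intro e he
    have expand : g * (H - C c⁻¹ * hk) = g * H - C c⁻¹ * (g * hk) := by ring
    rw [expand, map_sub, homogeneousComponent_C_mul]
    have hkhom : hk.IsHomogeneous (k + 1) := homogeneousComponent_isHomogeneous _ _
    have key : homogeneousComponent e (g * hk) =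
        if e = k + 1 then C c * hk else 0 := by
      rw [hc_mul]
      by_cases hek : e = k + 1
      · rw [if_pos hek]
        rw [Finset.sum_eq_single (0, k + 1)]
        · rw [homogeneousComponent_zero, hc_of_isHomogeneous hkhom, if_pos rfl]
        · intro ab hab hne
          rw [hc_of_isHomogeneous hkhom]
          rw [Finset.HasAntidiagonal.mem_antidiagonal] at hab
          have : ab.2 ≠ k + 1 := by
            intro h2
            apply hne
            have : ab.1 = 0 := by omega
            rw [Prod.ext_iff]
            exact ⟨this, h2⟩
          rw [if_neg this, mul_zero]
        · intro hmem
          exact absurd (by rw [Finset.HasAntidiagonal.mem_antidiagonal]; omega) hmem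
      · rw [if_neg hek]
        apply Finset.sum_eq_zero
        intro ab hab
        rw [Finset.HasAntidiagonal.mem_antidiagonal] at hab
        rw [hc_of_isHomogeneous hkhom, if_neg (by omega), mul_zero]
    rw [key]
    by_cases hek : e = k + 1
    · rw [if_pos hek, if_neg (by omega), hek]
      rw [← mul_assoc, ← map_mul, inv_mul_cancel₀ hg, map_one, one_mul]
      exact sub_self _
    · rw [if_neg hek, mul_zero, sub_zero]
      exact hH e (by omega)

end Field

section StepC

variable {F : Type*} [Field F] [CharZero F]

lemma stepC {n m d r' : ℕ}
    (M : Matrix (Fin m) (Fin m) (MvPolynomial (Fin n) F))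
    (hM : ∀ p q, (M p q).IsHomogeneous d)
    (g : MvPolynomial (Fin n) F) (hg : g ≠ 0)
    (a v : Fin r' → Fin m → MvPolynomial (Fin n) F)
    (hv : ∀ j q, (v j q).IsHomogeneous d)
    (heq : ∀ p q, g * M p q = ∑ j, a j p * v j q) :
    ∃ u w : Fin r' → Fin (d + 1) → Fin m → MvPolynomial (Fin n) F,
      (∀ j b p, (u j b p).IsHomogeneous (d - (b : ℕ))) ∧
      (∀ j b q, (w j b q).IsHomogeneous (b : ℕ)) ∧
      ∀ p q, M p q = ∑ j, ∑ b, u j b p * w j b q := by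
  classical
  -- a point where g does not vanish
  obtain ⟨β, hβ⟩ : ∃ β : Fin n → F, eval β g ≠ 0 := by
    by_contra h
    push_neg at h
    exact hg (MvPolynomial.funext fun x => by rw [h x, map_zero])
  set T : MvPolynomial (Fin n) F →ₐ[F] MvPolynomial (Fin n) F := tr β with hT
  set Ti : MvPolynomial (Fin n) F →ₐ[F] MvPolynomial (Fin n) F := tr (-β) with hTi
  set G := T g with hG
  have hc0 : coeff 0 G ≠ 0 := by rw [hG, hT, coeff_zero_tr]; exact hβ
  obtain ⟨H, hH⟩ := trunc_inv G hc0 d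
  set N : Fin m → Fin m → MvPolynomial (Fin n) F := fun p q => T (M p q) with hN
  set A : Fin r' → Fin m → MvPolynomial (Fin n) F := fun j p => T (a j p) with hA
  set V : Fin r' → Fin m → MvPolynomial (Fin n) F := fun j q => T (v j q) with hV
  have hGN : ∀ p q, G * N p q = ∑ j, A j p * V j q := by
    intro p q
    have := congrArg T (heq p q)
    rw [map_mul, map_sum] at this
    simpa [hG, hN, hA, hV, map_mul] using this
  have hNdeg : ∀ p q, (N p q).totalDegree ≤ d := fun p q =>
    le_trans (tdeg_tr_le _ _) (hM p q).totalDegree_le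
  have hVdeg : ∀ j q, (V j q).totalDegree ≤ d := fun j q =>
    le_trans (tdeg_tr_le _ _) (hv j q).totalDegree_le
  set t : Fin r' → Fin (d + 1) → Fin m → MvPolynomial (Fin n) F := fun j b p =>
    ∑ e ∈ Finset.range (d - (b : ℕ) + 1), homogeneousComponent e (H * A j p) with ht
  set w : Fin r' → Fin (d + 1) → Fin m → MvPolynomial (Fin n) F := fun j b q =>
    homogeneousComponent (b : ℕ) (V j q) with hw
  have htdeg : ∀ j b p, (t j b p).totalDegree ≤ d - (b : ℕ) := by
    intro j b p
    apply le_trans (totalDegree_finset_sum _ _)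
    apply Finset.sup_le
    intro e he
    rw [Finset.mem_range] at he
    exact le_trans (tdeg_hc_le _ _) (by omega)
  have hwdeg : ∀ j b q, (w j b q).totalDegree ≤ (b : ℕ) := fun j b q => tdeg_hc_le _ _
  have hc_t : ∀ j (b : Fin (d + 1)) p (x : ℕ), x ≤ d - (b : ℕ) →
      homogeneousComponent x (t j b p) = homogeneousComponent x (H * A j p) := by
    intro j b p x hx
    rw [ht]
    simp only
    rw [map_sum]
    rw [Finset.sum_eq_single x]
    · rw [hc_of_isHomogeneous (homogeneousComponent_isHomogeneous x _), if_pos rfl]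
    · intro e _ hne
      rw [hc_of_isHomogeneous (homogeneousComponent_isHomogeneous e _),
        if_neg (Ne.symm hne)]
    · intro hx'
      exact absurd (Finset.mem_range.2 (by omega)) hx'
  -- the key claim: all homogeneous components agree
  have claim : ∀ p q (e : ℕ), homogeneousComponent e (N p q) =
      homogeneousComponent e (∑ j, ∑ b, t j b p * w j b q) := by
    intro p q e
    by_cases he : e ≤ d
    · -- low-degree case
      have way1 : homogeneousComponent e (H * (G * N p q)) =
          homogeneousComponent e (N p q) := by
        rw [show H * (G * N p q) = G * H * N p q by ring, hc_mul]
        rw [Finset.sum_eq_single (0, e)]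
        · rw [hH 0 (by omega), if_pos rfl, one_mul]
        · intro xy hxy hne
          rw [Finset.HasAntidiagonal.mem_antidiagonal] at hxy
          have hx1 : xy.1 ≠ 0 := by
            intro h0
            exact hne (by rw [Prod.ext_iff]; constructor <;> simp_all)
          rw [hH xy.1 (by omega), if_neg hx1, zero_mul]
        · intro hmem
          exact absurd (by rw [Finset.HasAntidiagonal.mem_antidiagonal]; omega) hmem
      have way2 : H * (G * N p q) = ∑ j, H * A j p * V j q := by
        rw [hGN p q, Finset.mul_sum]
        exact Finset.sum_congr rfl fun j _ => by ring
      rw [← way1, way2, map_sum, map_sum]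
      apply Finset.sum_congr rfl
      intro j _
      rw [hc_mul, map_sum]
      have inner : ∀ b : Fin (d + 1), homogeneousComponent e (t j b p * w j b q) =
          ∑ xy ∈ Finset.HasAntidiagonal.antidiagonal e,
            homogeneousComponent xy.1 (t j b p) *
              homogeneousComponent xy.2 (w j b q) := fun b => hc_mul _ _ _
      rw [Finset.sum_congr rfl fun b _ => inner b, Finset.sum_comm]
      apply Finset.sum_congr rfl
      intro xy hxy
      rw [Finset.HasAntidiagonal.mem_antidiagonal] at hxy
      have hy : xy.2 ≤ d := by omega
      set b₀ : Fin (d + 1) := ⟨xy.2, by omega⟩ with hb₀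
      rw [Finset.sum_eq_single b₀]
      · have h1 : homogeneousComponent xy.2 (w j b₀ q) = w j b₀ q := by
          rw [hw]
          simp only
          rw [hc_of_isHomogeneous (homogeneousComponent_isHomogeneous _ _), if_pos rfl]
      
        rw [h1, hc_t j b₀ p xy.1 (by have hv : (b₀ : ℕ) = xy.2 := rfl; omega), hw]
      · intro b _ hne
        have : xy.2 ≠ (b : ℕ) := by
          intro hx
          exact hne (Fin.ext hx.symm)
        rw [hw]
        simp only
        rw [hc_of_isHomogeneous (homogeneousComponent_isHomogeneous _ _), if_neg this,
          mul_zero]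
      · intro hmem
        exact absurd (Finset.mem_univ _) hmem
    · -- high-degree case: both sides vanish
      rw [hc_zero_of_tdeg_le (hNdeg p q) (by omega)]
      rw [map_sum]
      symm
      apply Finset.sum_eq_zero
      intro j _
      rw [map_sum]
      apply Finset.sum_eq_zero
      intro b _
      have hb : (b : ℕ) ≤ d := by omega
      have : (t j b p * w j b q).totalDegree ≤ d := by
        apply le_trans (totalDegree_mul _ _)
        have := htdeg j b p
        have := hwdeg j b q
        omega
      exact hc_zero_of_tdeg_le this (by omega)
  have hNQ : ∀ p q, N p q = ∑ j, ∑ b, t j b p * w j b q := fun p q => ext_hc (claim p q)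
  have hM' : ∀ p q, M p q = ∑ j, ∑ b, Ti (t j b p) * Ti (w j b q) := by
    intro p q
    have h0 := congrArg Ti (hNQ p q)
    rw [map_sum] at h0
    have h1 : Ti (N p q) = M p q := by rw [hN]; exact tr_tr β (M p q)
    rw [h1] at h0
    rw [h0]
    apply Finset.sum_congr rfl
    intro j _
    rw [map_sum]
    exact Finset.sum_congr rfl fun b _ => map_mul _ _ _
  have hTit : ∀ j b p, (Ti (t j b p)).totalDegree ≤ d - (b : ℕ) := fun j b p =>
    le_trans (tdeg_tr_le _ _) (htdeg j b p)
  have hTiw : ∀ j b q, (Ti (w j b q)).totalDegree ≤ (b : ℕ) := fun j b q =>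
    le_trans (tdeg_tr_le _ _) (hwdeg j b q)
  refine ⟨fun j b p => homogeneousComponent (d - (b : ℕ)) (Ti (t j b p)),
    fun j b q => homogeneousComponent (b : ℕ) (Ti (w j b q)),
    fun j b p => homogeneousComponent_isHomogeneous _ _,
    fun j b q => homogeneousComponent_isHomogeneous _ _, ?_⟩
  intro p q
  have h1 : M p q = homogeneousComponent d (M p q) := by
    rw [hc_of_isHomogeneous (hM p q), if_pos rfl]
  rw [h1]
  conv_lhs => rw [hM' p q]
  rw [map_sum]
  apply Finset.sum_congr rfl
  intro j _
  rw [map_sum]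
  apply Finset.sum_congr rfl
  intro b _
  have hb : (b : ℕ) ≤ d := by omega
  rw [hc_mul]
  rw [Finset.sum_eq_single (d - (b : ℕ), (b : ℕ))]
  · intro xy hxy hne
    rw [Finset.HasAntidiagonal.mem_antidiagonal] at hxy
    rcases Nat.lt_or_ge xy.2 (b : ℕ) with h2 | h2
    · have : d - (b : ℕ) < xy.1 := by omega
      rw [hc_zero_of_tdeg_le (hTit j b p) this, zero_mul]
    · have h3 : (b : ℕ) < xy.2 := by
        rcases Nat.lt_or_ge (b : ℕ) xy.2 with h | h
        · exact h
        · exfalso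
          apply hne
          have h4 : xy.2 = (b : ℕ) := le_antisymm h h2
          rw [Prod.ext_iff]
          exact ⟨by omega, h4⟩
      rw [hc_zero_of_tdeg_le (hTiw j b q) h3, mul_zero]
  · intro hmem
    exact absurd (by rw [Finset.HasAntidiagonal.mem_antidiagonal]; omega) hmem

end StepC

section StepAB

variable {F : Type*} [Field F]

lemma stepAB {n m r : ℕ}
    (Mm : Matrix (Fin m) (Fin m) (MvPolynomial (Fin n) F))
    (hr : (Mm.map (algebraMap (MvPolynomial (Fin n) F)
      (FractionRing (MvPolynomial (Fin n) F)))).rank ≤ r) :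
    ∃ r', r' ≤ r ∧ ∃ g : MvPolynomial (Fin n) F, g ≠ 0 ∧
      ∃ (a : Fin r' → Fin m → MvPolynomial (Fin n) F) (ρ : Fin r' → Fin m),
        ∀ p q, g * Mm p q = ∑ j, a j p * Mm (ρ j) q := by
  classical
  have hrank : Module.finrank (FractionRing (MvPolynomial (Fin n) F)) (Submodule.span (FractionRing (MvPolynomial (Fin n) F)) (Set.range (Mm.map (algebraMap (MvPolynomial (Fin n) F) (FractionRing (MvPolynomial (Fin n) F)))))) ≤ r := by
    exact (Matrix.rank_eq_finrank_span_row _).symm.trans_le hr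
  obtain ⟨b, hbS, hspan, hli⟩ := exists_linearIndependent (FractionRing (MvPolynomial (Fin n) F)) (Set.range (Mm.map (algebraMap (MvPolynomial (Fin n) F) (FractionRing (MvPolynomial (Fin n) F)))))
  have hbfin : b.Finite := (Set.finite_range (Mm.map (algebraMap (MvPolynomial (Fin n) F) (FractionRing (MvPolynomial (Fin n) F))))).subset hbS
  haveI : Fintype b := hbfin.fintype
  have hcard : b.toFinset.card = Module.finrank (FractionRing (MvPolynomial (Fin n) F)) (Submodule.span (FractionRing (MvPolynomial (Fin n) F)) b) :=
    (finrank_span_set_eq_card hli).symm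
  have hble : b.toFinset.card ≤ r := by
    rw [hcard, hspan]
    exact hrank
  set r' := b.toFinset.card with hr'
  set e : b.toFinset ≃ Fin r' := b.toFinset.equivFin with he
  have hpick : ∀ x : b.toFinset, ∃ i : Fin m, (Mm.map (algebraMap (MvPolynomial (Fin n) F) (FractionRing (MvPolynomial (Fin n) F)))) i = (x : Fin m → (FractionRing (MvPolynomial (Fin n) F))) := by
    intro x
    have hx : (x : Fin m → (FractionRing (MvPolynomial (Fin n) F))) ∈ b := by
      have := x.2
      rwa [Set.mem_toFinset] at this
    exact hbS hx
  choose ρ0 hρ0 using hpick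
  set ρ : Fin r' → Fin m := fun j => ρ0 (e.symm j) with hρ
  have hrow : ∀ p : Fin m,
      ((Mm.map (algebraMap (MvPolynomial (Fin n) F) (FractionRing (MvPolynomial (Fin n) F)))) p) ∈ Submodule.span (FractionRing (MvPolynomial (Fin n) F)) (Set.range fun j : Fin r' => (Mm.map (algebraMap (MvPolynomial (Fin n) F) (FractionRing (MvPolynomial (Fin n) F)))) (ρ j)) := by
    intro p
    have h1 : (Mm.map (algebraMap (MvPolynomial (Fin n) F) (FractionRing (MvPolynomial (Fin n) F)))) p ∈ Submodule.span (FractionRing (MvPolynomial (Fin n) F)) (Set.range (Mm.map (algebraMap (MvPolynomial (Fin n) F) (FractionRing (MvPolynomial (Fin n) F))))) :=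
      Submodule.subset_span (Set.mem_range_self p)
    rw [← hspan] at h1
    have h2 : b ⊆ Set.range fun j : Fin r' => (Mm.map (algebraMap (MvPolynomial (Fin n) F) (FractionRing (MvPolynomial (Fin n) F)))) (ρ j) := by
      intro x hx
      refine ⟨e ⟨x, Set.mem_toFinset.2 hx⟩, ?_⟩
      simp only [hρ, Equiv.symm_apply_apply]
      exact hρ0 _
    exact Submodule.span_mono h2 h1
  have hcoef : ∀ p, ∃ c : Fin r' → (FractionRing (MvPolynomial (Fin n) F)), ∑ j, c j • (Mm.map (algebraMap (MvPolynomial (Fin n) F) (FractionRing (MvPolynomial (Fin n) F)))) (ρ j) = (Mm.map (algebraMap (MvPolynomial (Fin n) F) (FractionRing (MvPolynomial (Fin n) F)))) p := fun p =>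
    (Submodule.mem_span_range_iff_exists_fun (FractionRing (MvPolynomial (Fin n) F))).1 (hrow p)
  choose C hC using hcoef
  obtain ⟨g0, hg0⟩ := IsLocalization.exist_integer_multiples
    (nonZeroDivisors (MvPolynomial (Fin n) F)) (Finset.univ : Finset (Fin m × Fin r')) (fun x => C x.1 x.2)
  have hint : ∀ x : Fin m × Fin r', ∃ a : (MvPolynomial (Fin n) F),
      algebraMap (MvPolynomial (Fin n) F) (FractionRing (MvPolynomial (Fin n) F)) a = (g0 : (MvPolynomial (Fin n) F)) • C x.1 x.2 := by
    intro x
    exact hg0 x (Finset.mem_univ x)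
  choose A hA using hint
  refine ⟨r', hble, (g0 : (MvPolynomial (Fin n) F)), mem_nonZeroDivisors_iff_ne_zero.mp g0.2,
    fun j p => A (p, j), ρ, ?_⟩
  intro p q
  show (g0 : (MvPolynomial (Fin n) F)) * Mm p q = ∑ j, A (p, j) * Mm (ρ j) q
  apply IsFractionRing.injective (MvPolynomial (Fin n) F) (FractionRing (MvPolynomial (Fin n) F))
  rw [map_mul, map_sum]
  have hCpq : ∑ j, C p j * (Mm.map (algebraMap (MvPolynomial (Fin n) F) (FractionRing (MvPolynomial (Fin n) F)))) (ρ j) q = (Mm.map (algebraMap (MvPolynomial (Fin n) F) (FractionRing (MvPolynomial (Fin n) F)))) p q := by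
    have := congrFun (hC p) q
    simpa using this
  have lhs : algebraMap (MvPolynomial (Fin n) F) (FractionRing (MvPolynomial (Fin n) F)) ((g0 : (MvPolynomial (Fin n) F)) * Mm p q) = algebraMap (MvPolynomial (Fin n) F) (FractionRing (MvPolynomial (Fin n) F)) (g0 : (MvPolynomial (Fin n) F)) * (Mm.map (algebraMap (MvPolynomial (Fin n) F) (FractionRing (MvPolynomial (Fin n) F)))) p q := by
    rw [map_mul]
    rfl
  calc algebraMap (MvPolynomial (Fin n) F) (FractionRing (MvPolynomial (Fin n) F)) ((g0 : (MvPolynomial (Fin n) F))) * algebraMap (MvPolynomial (Fin n) F) (FractionRing (MvPolynomial (Fin n) F)) (Mm p q)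
      = algebraMap (MvPolynomial (Fin n) F) (FractionRing (MvPolynomial (Fin n) F)) (g0 : (MvPolynomial (Fin n) F)) * (Mm.map (algebraMap (MvPolynomial (Fin n) F) (FractionRing (MvPolynomial (Fin n) F)))) p q := rfl
    _ = algebraMap (MvPolynomial (Fin n) F) (FractionRing (MvPolynomial (Fin n) F)) (g0 : (MvPolynomial (Fin n) F)) * ∑ j, C p j * (Mm.map (algebraMap (MvPolynomial (Fin n) F) (FractionRing (MvPolynomial (Fin n) F)))) (ρ j) q := by rw [hCpq]
    _ = ∑ j, (algebraMap (MvPolynomial (Fin n) F) (FractionRing (MvPolynomial (Fin n) F)) (g0 : (MvPolynomial (Fin n) F)) * C p j) * (Mm.map (algebraMap (MvPolynomial (Fin n) F) (FractionRing (MvPolynomial (Fin n) F)))) (ρ j) q := by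
        rw [Finset.mul_sum]
        exact Finset.sum_congr rfl fun j _ => by ring
    _ = ∑ j, algebraMap (MvPolynomial (Fin n) F) (FractionRing (MvPolynomial (Fin n) F)) (A (p, j) * Mm (ρ j) q) := by
        apply Finset.sum_congr rfl
        intro j _
        rw [map_mul, hA (p, j), Algebra.smul_def]
        rfl

end StepAB

theorem stmt9 (F : Type*) [Field F] [CharZero F] (n m d r : ℕ)
    (M : Matrix (Fin m) (Fin m) (MvPolynomial (Fin n) F))
    (hM : ∀ p q, (M p q).IsHomogeneous d)
    (hr : (M.map (algebraMap (MvPolynomial (Fin n) F)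
      (FractionRing (MvPolynomial (Fin n) F)))).rank ≤ r) :
    ∃ R, R ≤ r * (d + 1) ∧
      ∃ u v : Fin R → Fin m → MvPolynomial (Fin n) F, ∃ du dv : Fin R → ℕ,
        (∀ i, du i + dv i = d) ∧
        (∀ i p, (u i p).IsHomogeneous (du i)) ∧
        (∀ i p, (v i p).IsHomogeneous (dv i)) ∧
        M = ∑ i, Matrix.of fun p q => u i p * v i q := by
  obtain ⟨r', hr'le, g, hg, a, ρ, heq⟩ := stepAB M hr
  obtain ⟨u', w', hu'hom, hw'hom, hdecomp⟩ := stepC M hM g hg a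
    (fun j q => M (ρ j) q) (fun j q => hM (ρ j) q) heq
  set R := r' * (d + 1) with hR
  set E : Fin R → Fin r' × Fin (d + 1) := fun i => finProdFinEquiv.symm i with hE
  refine ⟨R, Nat.mul_le_mul_right _ hr'le,
    fun i p => u' (E i).1 (E i).2 p,
    fun i q => w' (E i).1 (E i).2 q,
    fun i => d - ((E i).2 : ℕ), fun i => ((E i).2 : ℕ),
    fun i => by show d - ((E i).2 : ℕ) + ((E i).2 : ℕ) = d; have := ((E i).2).isLt; omega,
    fun i p => hu'hom _ _ _,
    fun i q => hw'hom _ _ _, ?_⟩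
  apply Matrix.ext
  intro p q
  rw [Matrix.sum_apply]
  have hsum : ∑ i : Fin R, u' (E i).1 (E i).2 p * w' (E i).1 (E i).2 q =
      ∑ x : Fin r' × Fin (d + 1), u' x.1 x.2 p * w' x.1 x.2 q := by
    apply Fintype.sum_equiv finProdFinEquiv.symm
    intro i
    rfl
  calc M p q = ∑ j, ∑ b, u' j b p * w' j b q := hdecomp p q
    _ = ∑ x : Fin r' × Fin (d + 1), u' x.1 x.2 p * w' x.1 x.2 q := by
        rw [Fintype.sum_prod_type]
    _ = ∑ i : Fin R, u' (E i).1 (E i).2 p * w' (E i).1 (E i).2 q := hsum.symm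
    _ = ∑ i : Fin R, Matrix.of (fun p q => u' (E i).1 (E i).2 p * w' (E i).1 (E i).2 q) p q := rfl
end

section
/- Let L : Ten_{n,d}(F) → Mat_m(F) be linear with rank(L(u_1 ⊗ ··· ⊗ u_d)) ≤ r for all rank-one tensors, over an algebraically closed field of characteristic zero. Then for any tensor T, the tensor rank of T is at least rank(L(T))/r, and consequently this method cannot certify a tensor rank lower bound exceeding 2^d · n^{⌊d/2⌋} for any T ∈ Ten_{n,d}(F). -/
open Matrix Module Submodule

section MatrixLemmas

variable {K : Type*} [Field K]

lemma st_rank_add_le {α β : Type*} [Fintype α] [Fintype β]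
    (A B : Matrix α β K) : (A + B).rank ≤ A.rank + B.rank := by
  classical
  have h : LinearMap.range (A + B).mulVecLin ≤
      LinearMap.range A.mulVecLin ⊔ LinearMap.range B.mulVecLin := by
    rintro x ⟨v, rfl⟩
    rw [Matrix.mulVecLin_add]
    exact Submodule.mem_sup.2 ⟨_, ⟨v, rfl⟩, _, ⟨v, rfl⟩, by simp⟩
  exact le_trans (Submodule.finrank_mono h)
    (Submodule.finrank_add_le_finrank_add_finrank _ _)

lemma st_rank_sum_le {α β γ : Type*} [Fintype α] [Fintype β] (s : Finset γ)
    (f : γ → Matrix α β K) : (∑ x ∈ s, f x).rank ≤ ∑ x ∈ s, (f x).rank := by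
  classical
  induction s using Finset.induction_on with
  | empty => simp
  | insert _ _ hx ih =>
    rw [Finset.sum_insert hx, Finset.sum_insert hx]
    exact le_trans (st_rank_add_le _ _) (by omega)

lemma st_rank_submatrix_le {α β : Type*} [Fintype α] [Fintype β] [DecidableEq α] [DecidableEq β]
    {s t : ℕ} (A : Matrix α β K) (f : Fin s → α) (g : Fin t → β) :
    (A.submatrix f g).rank ≤ A.rank := by
  classical
  have hP : A.submatrix f g =
      (Matrix.of fun i a => if f i = a then (1 : K) else 0) * A *
        (Matrix.of fun b j => if b = g j then (1 : K) else 0) := by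
    ext i j
    simp only [Matrix.mul_apply, Matrix.of_apply, Matrix.submatrix_apply]
    simp [ite_mul, mul_ite, Finset.sum_ite_eq, Finset.sum_ite_eq']
  rw [hP]
  exact le_trans (Matrix.rank_mul_le_left _ _) (Matrix.rank_mul_le_right _ _)

lemma st_exists_cols {α β : Type*} [Fintype α] [Fintype β]
    (N : Matrix α β K) (s : ℕ) (hs : s ≤ N.rank) :
    ∃ g : Fin s → β, LinearIndependent K (fun j => Nᵀ (g j)) := by
  classical
  rw [Matrix.rank_eq_finrank_span_cols] at hs
  obtain ⟨b, hbsub, hbspan, hbli⟩ := exists_linearIndependent K (Set.range Nᵀ)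
  have hbfin : b.Finite := Set.Finite.subset (Set.finite_range _) hbsub
  haveI : Fintype b := hbfin.fintype
  have hcard : Module.finrank K (span K (Set.range Nᵀ)) = Fintype.card b := by
    have h2 := finrank_span_eq_card hbli
    rw [Subtype.range_coe] at h2
    rw [← hbspan]; exact h2
  have hle : Fintype.card (Fin s) ≤ Fintype.card b := by
    rw [Fintype.card_fin, ← hcard]; exact hs
  obtain ⟨emb⟩ := Function.Embedding.nonempty_iff_card_le.2 hle
  have hmem : ∀ j : Fin s, (emb j : α → K) ∈ Set.range Nᵀ := fun j => hbsub (emb j).2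
  choose g hg using hmem
  refine ⟨g, ?_⟩
  have : (fun j => Nᵀ (g j)) = (Subtype.val : b → α → K) ∘ emb := by
    funext j; simp [hg j]
  rw [this]
  exact hbli.comp emb emb.injective

lemma st_exists_det {α β : Type*} [Fintype α] [Fintype β] [DecidableEq α] [DecidableEq β]
    (N : Matrix α β K) (s : ℕ) (hs : s ≤ N.rank) :
    ∃ (f : Fin s → α) (g : Fin s → β), (N.submatrix f g).det ≠ 0 := by
  classical
  obtain ⟨g, hli⟩ := st_exists_cols N s hs
  set N1 : Matrix α (Fin s) K := N.submatrix id g with hN1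
  have hN1T : N1ᵀ = fun j => Nᵀ (g j) := by
    funext j a; simp [hN1]
  have h1 : N1.rank = s := by
    rw [Matrix.rank_eq_finrank_span_cols]
    show finrank K (span K (Set.range N1ᵀ)) = s
    rw [hN1T, finrank_span_eq_card hli, Fintype.card_fin]
  have h2 : s ≤ N1ᵀ.rank := by rw [Matrix.rank_transpose, h1]
  obtain ⟨f, hli2⟩ := st_exists_cols N1ᵀ s h2
  have hrows : ∀ i : Fin s, (N.submatrix f g) i = N1ᵀᵀ (f i) := by
    intro i; funext j; simp [hN1]
  refine ⟨f, g, ?_⟩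
  intro hdet
  have hdetT : (N.submatrix f g)ᵀ.det = 0 := by rw [Matrix.det_transpose]; exact hdet
  obtain ⟨v, hv0, hv⟩ := (Matrix.exists_mulVec_eq_zero_iff).2 hdetT
  apply hv0
  have hsum : ∑ i, v i • (N.submatrix f g) i = 0 := by
    funext j
    have := congrFun hv j
    simpa [Matrix.mulVec, dotProduct, Finset.sum_apply, mul_comm] using this
  have := Fintype.linearIndependent_iff.1 (by
    have : LinearIndependent K (fun i => (N.submatrix f g) i) := by
      rw [show (fun i => (N.submatrix f g) i) = fun i => N1ᵀᵀ (f i) from funext hrows]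
      exact hli2
    exact this) v hsum
  funext i; exact this i

lemma st_exists_fact {α β : Type*} [Fintype α] [Fintype β]
    (N : Matrix α β K) (r : ℕ) (h : N.rank ≤ r) :
    ∃ (A : Matrix α (Fin r) K) (B : Matrix (Fin r) β K), N = A * B := by
  classical
  set W := span K (Set.range Nᵀ) with hW
  haveI : FiniteDimensional K W := FiniteDimensional.span_of_finite K (Set.finite_range _)
  have hr' : finrank K W ≤ r := by rw [Matrix.rank_eq_finrank_span_cols] at h; exact h
  set bb := Module.finBasis K W with hbb
  set A : Matrix α (Fin r) K := Matrix.of fun a j =>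
    if hj : (j : ℕ) < finrank K W then ((bb ⟨j, hj⟩ : W) : α → K) a else 0 with hA
  set B : Matrix (Fin r) β K := Matrix.of fun j b =>
    if hj : (j : ℕ) < finrank K W then
      bb.repr ⟨Nᵀ b, Submodule.subset_span (Set.mem_range_self b)⟩ ⟨j, hj⟩ else 0 with hB
  refine ⟨A, B, ?_⟩
  ext a b
  set x : W := ⟨Nᵀ b, Submodule.subset_span (Set.mem_range_self b)⟩ with hx
  have hgoal : N a b = (x : α → K) a := rfl
  rw [hgoal, Matrix.mul_apply]
  set Ff : ℕ → K := fun j =>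
    if hj : j < finrank K W then ((bb ⟨j, hj⟩ : W) : α → K) a * bb.repr x ⟨j, hj⟩ else 0 with hFf
  have hterm : ∀ j : Fin r, A a j * B j b = Ff (j : ℕ) := by
    intro j
    by_cases hj : (j : ℕ) < finrank K W <;> simp [hA, hB, hFf, hj, hx]
  rw [Finset.sum_congr rfl fun j _ => hterm j]
  rw [Fin.sum_univ_eq_sum_range Ff r]
  rw [← Finset.sum_subset (Finset.range_subset_range.2 hr') (by
    intro j _ hj
    have : ¬ j < finrank K W := by simp at hj; omega
    simp [hFf, this])]
  rw [← Fin.sum_univ_eq_sum_range Ff (finrank K W)]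
  have : ∀ j : Fin (finrank K W), Ff (j : ℕ) = bb.repr x j • ((bb j : W) : α → K) a := by
    intro j
    simp [hFf, j.isLt, mul_comm, Fin.eta]
  rw [Finset.sum_congr rfl fun j _ => this j]
  have hrepr := bb.sum_repr x
  have hcoe : ((∑ j, bb.repr x j • bb j : W) : α → K) a = (x : α → K) a := by rw [hrepr]
  rw [← hcoe]
  have : ((∑ j, bb.repr x j • bb j : W) : α → K) = ∑ j, bb.repr x j • ((bb j : W) : α → K) := by
    rw [Submodule.coe_sum]; rfl
  rw [this, Finset.sum_apply]
  simp

end MatrixLemmas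

open MvPolynomial

section CoeffLemmas

variable {F : Type*} [Field F] {n d : ℕ}

/-- value of the "partial squarefree exponent" finsupp -/
lemma st_epsS_apply (i : Fin d → Fin n) (S : Finset (Fin d)) (v : Fin d × Fin n) :
    (∑ k ∈ S, Finsupp.single ((k, i k) : Fin d × Fin n) 1) v
      = if v.1 ∈ S ∧ v.2 = i v.1 then 1 else 0 := by
  classical
  rcases v with ⟨a, x⟩
  rw [Finset.sum_apply']
  have h1 : ∀ k ∈ S, (Finsupp.single ((k, i k) : Fin d × Fin n) 1) (a, x)
      = if k = a then (if x = i a then 1 else 0) else 0 := by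
    intro k _
    rw [Finsupp.single_apply]
    by_cases hk : k = a
    · subst hk
      by_cases hx : x = i k <;> simp [hx, Prod.ext_iff, eq_comm]
    · simp [hk, Prod.ext_iff]
  rw [Finset.sum_congr rfl h1, Finset.sum_ite_eq' S a]
  by_cases h1 : a ∈ S <;> by_cases h2 : x = i a <;> simp [h1, h2]

lemma st_supp (j : Fin d → Fin n) (c : Fin d → F) (s : Finset (Fin d)) :
    ∀ ε : (Fin d × Fin n) →₀ ℕ,
      coeff ε (∏ k ∈ s, (X ((k, j k) : Fin d × Fin n) + C (c k))) ≠ 0 →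
        ∀ v ∈ ε.support, v.1 ∈ s := by
  classical
  induction s using Finset.induction_on with
  | empty =>
    intro ε hε v hv
    simp only [Finset.prod_empty, MvPolynomial.coeff_one] at hε
    by_cases h : (0 : (Fin d × Fin n) →₀ ℕ) = ε
    · subst h; simp at hv
    · simp [h] at hε
  | @insert a s ha ih =>
    intro ε hε v hv
    rw [Finset.prod_insert ha, add_mul, MvPolynomial.coeff_add,
      MvPolynomial.coeff_X_mul', MvPolynomial.coeff_C_mul] at hε
    by_cases hX : coeff ε (C (c a) * ∏ k ∈ s, (X ((k, j k) : Fin d × Fin n) + C (c k))) ≠ 0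
    · rw [MvPolynomial.coeff_C_mul] at hX
      have : coeff ε (∏ k ∈ s, (X ((k, j k) : Fin d × Fin n) + C (c k))) ≠ 0 := by
        intro h0; rw [h0, mul_zero] at hX; exact hX rfl
      exact Finset.mem_insert_of_mem (ih ε this v hv)
    · rw [MvPolynomial.coeff_C_mul] at hX
      push_neg at hX
      rw [hX, add_zero] at hε
      by_cases hmem : ((a, j a) : Fin d × Fin n) ∈ ε.support
      · rw [if_pos hmem] at hε
        by_cases hva : v = (a, j a)
        · subst hva; exact Finset.mem_insert_self _ _
        · have hv' : v ∈ (ε - Finsupp.single ((a, j a) : Fin d × Fin n) 1).support := by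
            rw [Finsupp.mem_support_iff] at hv ⊢
            rw [Finsupp.tsub_apply, Finsupp.single_apply, if_neg (fun h => hva h.symm)]
            simpa using hv
          exact Finset.mem_insert_of_mem (ih _ hε v hv')
      · rw [if_neg hmem] at hε; exact absurd rfl hε

lemma st_keycoeff (i j : Fin d → Fin n) (c : Fin d → F) (s : Finset (Fin d)) :
    coeff (∑ k ∈ s, Finsupp.single ((k, i k) : Fin d × Fin n) 1)
        (∏ k ∈ s, (X ((k, j k) : Fin d × Fin n) + C (c k)))
      = if ∀ k ∈ s, j k = i k then 1 else 0 := by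
  classical
  induction s using Finset.induction_on with
  | empty => simp
  | @insert a s ha ih =>
    rw [Finset.prod_insert ha, Finset.sum_insert ha, add_mul, MvPolynomial.coeff_add,
      MvPolynomial.coeff_X_mul', MvPolynomial.coeff_C_mul]
    set εs := ∑ k ∈ s, Finsupp.single ((k, i k) : Fin d × Fin n) 1 with hεs
    set ε' := Finsupp.single ((a, i a) : Fin d × Fin n) 1 + εs with hε'
    have hεsval : ∀ v : Fin d × Fin n, εs v = if v.1 ∈ s ∧ v.2 = i v.1 then 1 else 0 :=
      fun v => st_epsS_apply i s v
    -- second summand is zero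
    have hC : coeff ε' (∏ k ∈ s, (X ((k, j k) : Fin d × Fin n) + C (c k))) = 0 := by
      by_contra h0
      have := st_supp j c s ε' h0 (a, i a) (by
        rw [Finsupp.mem_support_iff, hε', Finsupp.add_apply, Finsupp.single_apply]
        rw [hεsval (a, i a)]
        simp [ha])
      exact ha this
    rw [hC, mul_zero, add_zero]
    by_cases hja : j a = i a
    · have hmem : ((a, j a) : Fin d × Fin n) ∈ ε'.support := by
        rw [Finsupp.mem_support_iff, hε', Finsupp.add_apply, Finsupp.single_apply,
          hεsval (a, j a)]
        simp [hja, ha]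
      rw [if_pos hmem]
      have hsub : ε' - Finsupp.single ((a, j a) : Fin d × Fin n) 1 = εs := by
        rw [hε', hja, add_tsub_cancel_left]
      rw [hsub, ih]
      by_cases hall : ∀ k ∈ s, j k = i k
      · simp [hall, hja]
      · have : ¬ ∀ k ∈ insert a s, j k = i k := by
          intro h; exact hall fun k hk => h k (Finset.mem_insert_of_mem hk)
        simp [hall, this]
    · have hmem : ((a, j a) : Fin d × Fin n) ∉ ε'.support := by
        rw [Finsupp.mem_support_iff, hε', Finsupp.add_apply, Finsupp.single_apply,
          hεsval (a, j a)]
        have h1 : ¬ (((a, i a) : Fin d × Fin n) = (a, j a)) := by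
          simp only [Prod.mk.injEq, true_and]
          exact fun h => hja h.symm
        simp [h1, ha]
      rw [if_neg hmem]
      simp [hja]

lemma st_antidiag {M : Type*} [AddCommMonoid M] (i : Fin d → Fin n)
    (G : ((Fin d × Fin n) →₀ ℕ) → ((Fin d × Fin n) →₀ ℕ) → M) :
    ∑ p ∈ Finset.HasAntidiagonal.antidiagonal (∑ k, Finsupp.single ((k, i k) : Fin d × Fin n) 1), G p.1 p.2
      = ∑ S : Finset (Fin d),
          G (∑ k ∈ S, Finsupp.single ((k, i k) : Fin d × Fin n) 1)
            (∑ k ∈ Sᶜ, Finsupp.single ((k, i k) : Fin d × Fin n) 1) := by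
  classical
  set eps : Finset (Fin d) → ((Fin d × Fin n) →₀ ℕ) :=
    fun S => ∑ k ∈ S, Finsupp.single ((k, i k) : Fin d × Fin n) 1 with heps
  have hsum : ∀ S : Finset (Fin d), eps S + eps Sᶜ = eps Finset.univ := by
    intro S; rw [heps]; exact Finset.sum_add_sum_compl S _
  have hpair : ∀ p ∈ Finset.HasAntidiagonal.antidiagonal (eps Finset.univ),
      p = (eps ({k | p.1 (k, i k) ≠ 0} : Finset (Fin d)),
           eps ({k | p.1 (k, i k) ≠ 0} : Finset (Fin d))ᶜ) := by
    intro p hp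
    rw [Finset.HasAntidiagonal.mem_antidiagonal] at hp
    set S' : Finset (Fin d) := {k | p.1 (k, i k) ≠ 0} with hS'
    have h1 : p.1 = eps S' := by
      ext v
      have hv := DFunLike.congr_fun hp v
      rw [Finsupp.add_apply] at hv
      rw [st_epsS_apply i Finset.univ v] at hv
      simp only [Finset.mem_univ, true_and] at hv
      rw [heps, st_epsS_apply i S' v]
      by_cases hvi : v.2 = i v.1
      · rw [if_pos hvi] at hv
        have hvrw : v = (v.1, i v.1) := by rw [← hvi]
        by_cases hS : v.1 ∈ S'
        · rw [if_pos ⟨hS, hvi⟩]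
          have : p.1 (v.1, i v.1) ≠ 0 := by rw [hS'] at hS; simpa using hS
          rw [← hvrw] at this
          omega
        · rw [if_neg (fun hc => hS hc.1)]
          have : ¬ p.1 (v.1, i v.1) ≠ 0 := by rw [hS'] at hS; simpa using hS
          rw [← hvrw] at this
          omega
      · rw [if_neg hvi] at hv
        rw [if_neg (fun hc => hvi hc.2)]
        omega
    have h2 : p.2 = eps S'ᶜ := by
      have := hsum S'
      rw [← h1] at this
      have h3 : p.1 + p.2 = p.1 + eps S'ᶜ := by rw [hp, this]
      exact add_left_cancel h3
    exact Prod.ext h1 h2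
  refine Finset.sum_nbij' (fun p => ({k | p.1 (k, i k) ≠ 0} : Finset (Fin d)))
    (fun S => (eps S, eps Sᶜ)) ?_ ?_ ?_ ?_ ?_
  · intro p _; exact Finset.mem_univ _
  · intro S _
    rw [Finset.HasAntidiagonal.mem_antidiagonal]; exact hsum S
  · intro p hp
    exact (hpair p hp).symm
  · intro S _
    ext k
    simp only [Finset.mem_filter, Finset.mem_univ, true_and, heps]
    rw [show ((∑ k ∈ S, Finsupp.single ((k, i k) : Fin d × Fin n) 1) : (Fin d × Fin n) →₀ ℕ)
        ((k, i k) : Fin d × Fin n) = if k ∈ S ∧ i k = i k then 1 else 0 from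
      st_epsS_apply i S (k, i k)]
    by_cases h : k ∈ S <;> simp [h]
  · intro p hp
    have h := hpair p hp
    conv_lhs => rw [h]
end CoeffLemmas

open Matrix Module Submodule MvPolynomial

section GroupLemmas

variable {F : Type*} [Field F]

lemma st_rank_group {m r : ℕ} {Idx Key : Type*} [Fintype Idx] [DecidableEq Key]
    (key : Idx → Key) (c : Idx → F) (X : Idx → Matrix (Fin m) (Fin r) F)
    (Y : Idx → Matrix (Fin r) (Fin m) F)
    (hX : ∀ i i', key i = key i' → X i = X i') :
    (∑ i, c i • (X i * Y i)).rank ≤ (Finset.univ.image key).card * r := by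
  classical
  rw [← Finset.sum_fiberwise_of_maps_to
    (fun i _ => Finset.mem_image_of_mem key (Finset.mem_univ i))
    (fun i => c i • (X i * Y i))]
  refine le_trans (st_rank_sum_le _ _) ?_
  have hfiber : ∀ κ ∈ Finset.univ.image key,
      (∑ i ∈ Finset.univ.filter (fun i => key i = κ), c i • (X i * Y i)).rank ≤ r := by
    intro κ hκ
    obtain ⟨i₀, -, hi₀⟩ := Finset.mem_image.1 hκ
    have hrw : ∀ i ∈ Finset.univ.filter (fun i => key i = κ),
        c i • (X i * Y i) = X i₀ * (c i • Y i) := by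
      intro i hi
      rw [Finset.mem_filter] at hi
      rw [hX i i₀ (by rw [hi.2, hi₀]), Matrix.mul_smul]
    rw [Finset.sum_congr rfl hrw, ← Matrix.mul_sum]
    exact le_trans (Matrix.rank_mul_le_left _ _) (Matrix.rank_le_width _)
  refine le_trans (Finset.sum_le_sum hfiber) ?_
  rw [Finset.sum_const, smul_eq_mul]

lemma st_rank_group' {m r : ℕ} {Idx Key : Type*} [Fintype Idx] [DecidableEq Key]
    (key : Idx → Key) (c : Idx → F) (X : Idx → Matrix (Fin m) (Fin r) F)
    (Y : Idx → Matrix (Fin r) (Fin m) F)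
    (hY : ∀ i i', key i = key i' → Y i = Y i') :
    (∑ i, c i • (X i * Y i)).rank ≤ (Finset.univ.image key).card * r := by
  classical
  rw [← Finset.sum_fiberwise_of_maps_to
    (fun i _ => Finset.mem_image_of_mem key (Finset.mem_univ i))
    (fun i => c i • (X i * Y i))]
  refine le_trans (st_rank_sum_le _ _) ?_
  have hfiber : ∀ κ ∈ Finset.univ.image key,
      (∑ i ∈ Finset.univ.filter (fun i => key i = κ), c i • (X i * Y i)).rank ≤ r := by
    intro κ hκ
    obtain ⟨i₀, -, hi₀⟩ := Finset.mem_image.1 hκ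
    have hrw : ∀ i ∈ Finset.univ.filter (fun i => key i = κ),
        c i • (X i * Y i) = (c i • X i) * Y i₀ := by
      intro i hi
      rw [Finset.mem_filter] at hi
      rw [hY i i₀ (by rw [hi.2, hi₀]), Matrix.smul_mul]
    rw [Finset.sum_congr rfl hrw, ← Matrix.sum_mul]
    exact le_trans (Matrix.rank_mul_le_right _ _) (Matrix.rank_le_height _)
  refine le_trans (Finset.sum_le_sum hfiber) ?_
  rw [Finset.sum_const, smul_eq_mul]

lemma st_card_mask {n d : ℕ} (α₀ : Fin d → Fin n) (S : Finset (Fin d)) :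
    (Finset.univ.image
      (fun i : Fin d → Fin n => (fun k => if k ∈ S then i k else α₀ k : Fin d → Fin n))).card
      ≤ n ^ S.card := by
  classical
  have hinj : Set.InjOn (fun (α : Fin d → Fin n) => (fun k : {x // x ∈ S} => α k.1))
      ↑(Finset.univ.image
        (fun i : Fin d → Fin n => (fun k => if k ∈ S then i k else α₀ k : Fin d → Fin n))) := by
    intro α hα β hβ hres
    rw [Finset.mem_coe, Finset.mem_image] at hα hβ
    obtain ⟨a, -, rfl⟩ := hα
    obtain ⟨b, -, rfl⟩ := hβ
    funext k
    by_cases hk : k ∈ S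
    · have := congrFun hres ⟨k, hk⟩
      simpa [hk] using this
    · simp [hk]
  have := Finset.card_le_card_of_injOn _ (fun a _ => Finset.mem_univ _) hinj
  refine le_trans this ?_
  rw [Finset.card_univ, Fintype.card_fun, Fintype.card_coe, Fintype.card_fin]

lemma st_eps_mask {n d : ℕ} (i i' : Fin d → Fin n) (S : Finset (Fin d))
    (h : ∀ k ∈ S, i k = i' k) :
    (∑ k ∈ S, Finsupp.single ((k, i k) : Fin d × Fin n) 1)
      = ∑ k ∈ S, Finsupp.single ((k, i' k) : Fin d × Fin n) 1 :=
  Finset.sum_congr rfl fun k hk => by rw [h k hk]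

end GroupLemmas
section Main

variable {F : Type*} [Field F] [CharZero F]

set_option maxHeartbeats 1600000 in
lemma st_main (n m d r : ℕ)
    (L : ((Fin d → Fin n) → F) →ₗ[F] Matrix (Fin m) (Fin m) F)
    (hL : ∀ u : Fin d → Fin n → F,
      (L (fun j => ∏ k, u k (j k))).rank ≤ r)
    (T : (Fin d → Fin n) → F) :
    (L T).rank ≤ r * 2 ^ d * n ^ (d / 2) := by
  classical
  rcases isEmpty_or_nonempty (Fin d → Fin n) with hemp | hne
  · have hT : T = 0 := funext fun x => (hemp.false x).elim
    rw [hT, map_zero]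
    simp
  obtain ⟨α₀⟩ := hne
  set e : (Fin d → Fin n) → ((Fin d → Fin n) → F) :=
    fun i => (fun jj => if i = jj then (1 : F) else 0) with he
  set M : Matrix (Fin m) (Fin m) (MvPolynomial (Fin d × Fin n) F) :=
    Matrix.of fun p q => ∑ i : Fin d → Fin n,
      (∏ k, MvPolynomial.X ((k, i k) : Fin d × Fin n)) * MvPolynomial.C (L (e i) p q) with hM
  -- expansion of L in the basis e
  have hTsum : ∀ g : (Fin d → Fin n) → F, L g = ∑ i, g i • L (e i) := by
    intro g
    conv_lhs => rw [pi_eq_sum_univ g, map_sum]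
    exact Finset.sum_congr rfl fun i _ => map_smul L _ _
  -- evaluation of M
  have hMeval : ∀ pt : (Fin d × Fin n) → F,
      (M.map (MvPolynomial.eval pt)).rank ≤ r := by
    intro pt
    have h1 : M.map (MvPolynomial.eval pt) = L (fun jj => ∏ k, pt (k, jj k)) := by
      rw [hTsum (fun jj => ∏ k, pt (k, jj k))]
      ext p q
      simp [Matrix.map_apply, hM, Matrix.sum_apply, Matrix.smul_apply, smul_eq_mul,
        map_sum, MvPolynomial.eval_prod]
    rw [h1]
    exact hL fun k x => pt (k, x)
  -- nonvanishing points for nonzero polynomials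
  have hDne : ∀ D : MvPolynomial (Fin d × Fin n) F, D ≠ 0 →
      ∃ pt, MvPolynomial.eval pt D ≠ 0 := by
    intro D hD
    by_contra hc
    push_neg at hc
    exact hD (MvPolynomial.funext (q := 0) fun x => by rw [hc x, map_zero])
  -- rank over the fraction field
  set K := FractionRing (MvPolynomial (Fin d × Fin n) F) with hK
  set MK : Matrix (Fin m) (Fin m) K := M.map (algebraMap _ K) with hMK
  have hrankK : MK.rank ≤ r := by
    by_contra hgt
    push_neg at hgt
    obtain ⟨f, g, hdet⟩ := st_exists_det MK (r + 1) hgt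
    have hdet2 : algebraMap (MvPolynomial (Fin d × Fin n) F) K ((M.submatrix f g).det) ≠ 0 := by
      rw [RingHom.map_det]
      have : (algebraMap (MvPolynomial (Fin d × Fin n) F) K).mapMatrix (M.submatrix f g)
          = MK.submatrix f g := by
        rw [RingHom.mapMatrix_apply, hMK, Matrix.submatrix_map]
      rw [this]
      exact hdet
    have hD : (M.submatrix f g).det ≠ 0 := fun h => hdet2 (by rw [h, map_zero])
    obtain ⟨pt, hpt⟩ := hDne _ hD
    have heval : ((M.map (MvPolynomial.eval pt)).submatrix f g).det ≠ 0 := by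
      rw [Matrix.submatrix_map, ← RingHom.mapMatrix_apply, ← RingHom.map_det]
      exact hpt
    have hrank1 : ((M.map (MvPolynomial.eval pt)).submatrix f g).rank = r + 1 := by
      rw [Matrix.rank_of_isUnit _ ((Matrix.isUnit_iff_isUnit_det _).2
        (isUnit_iff_ne_zero.2 heval)), Fintype.card_fin]
    have h2 := st_rank_submatrix_le (M.map (MvPolynomial.eval pt)) f g
    have h3 := hMeval pt
    omega
  -- factorization over K
  obtain ⟨AK, BK, hfact⟩ := st_exists_fact MK r hrankK
  -- clear denominators
  set entries : Finset K :=
    (Finset.univ.image fun pl : Fin m × Fin r => AK pl.1 pl.2) ∪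
      (Finset.univ.image fun lp : Fin r × Fin m => BK lp.1 lp.2) with hentries
  obtain ⟨q, hq⟩ := IsLocalization.exist_integer_multiples_of_finset
    (nonZeroDivisors (MvPolynomial (Fin d × Fin n) F)) entries
  have hAint : ∀ (p : Fin m) (l : Fin r),
      ∃ x, algebraMap (MvPolynomial (Fin d × Fin n) F) K x = (q : MvPolynomial (Fin d × Fin n) F) • AK p l := by
    intro p l
    exact hq _ (Finset.mem_union_left _ (Finset.mem_image.2 ⟨(p, l), Finset.mem_univ _, rfl⟩))
  choose A0 hA0 using hAint
  have hBint : ∀ (l : Fin r) (p : Fin m),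
      ∃ x, algebraMap (MvPolynomial (Fin d × Fin n) F) K x = (q : MvPolynomial (Fin d × Fin n) F) • BK l p := by
    intro l p
    exact hq _ (Finset.mem_union_right _ (Finset.mem_image.2 ⟨(l, p), Finset.mem_univ _, rfl⟩))
  choose B0 hB0 using hBint
  have hqne : (q : MvPolynomial (Fin d × Fin n) F) ≠ 0 := nonZeroDivisors.ne_zero q.2
  obtain ⟨pt0, hpt0⟩ := hDne _ hqne
  -- the identity over the polynomial ring
  have hRid : (((q : MvPolynomial (Fin d × Fin n) F) * q) • M) = Matrix.of A0 * Matrix.of B0 := by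
    have hinj := IsFractionRing.injective (MvPolynomial (Fin d × Fin n) F) K
    refine Matrix.ext fun p p' => hinj ?_
    have h1 : algebraMap (MvPolynomial (Fin d × Fin n) F) K
        (((((q : MvPolynomial (Fin d × Fin n) F) * q) • M)) p p')
        = (algebraMap (MvPolynomial (Fin d × Fin n) F) K q)
          * (algebraMap (MvPolynomial (Fin d × Fin n) F) K q) * MK p p' := by
      rw [Matrix.smul_apply, smul_eq_mul, _root_.map_mul, _root_.map_mul, hMK, Matrix.map_apply, mul_assoc]
    have h2 : algebraMap (MvPolynomial (Fin d × Fin n) F) K ((Matrix.of A0 * Matrix.of B0) p p')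
        = (algebraMap (MvPolynomial (Fin d × Fin n) F) K q)
          * (algebraMap (MvPolynomial (Fin d × Fin n) F) K q) * MK p p' := by
      rw [Matrix.mul_apply, map_sum]
      have h3 : ∀ l : Fin r, algebraMap (MvPolynomial (Fin d × Fin n) F) K
          (Matrix.of A0 p l * Matrix.of B0 l p')
          = ((q : MvPolynomial (Fin d × Fin n) F) • AK p l) * ((q : MvPolynomial (Fin d × Fin n) F) • BK l p') := by
        intro l
        rw [_root_.map_mul, Matrix.of_apply, Matrix.of_apply, hA0, hB0]
      rw [Finset.sum_congr rfl fun l _ => h3 l]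
      have h4 : ∀ l : Fin r, ((q : MvPolynomial (Fin d × Fin n) F) • AK p l) * ((q : MvPolynomial (Fin d × Fin n) F) • BK l p')
          = (algebraMap (MvPolynomial (Fin d × Fin n) F) K q)
            * (algebraMap (MvPolynomial (Fin d × Fin n) F) K q) * (AK p l * BK l p') := by
        intro l
        rw [Algebra.smul_def, Algebra.smul_def]
        ring
      rw [Finset.sum_congr rfl fun l _ => h4 l, ← Finset.mul_sum]
      have : MK p p' = ∑ l, AK p l * BK l p' := by rw [hfact, Matrix.mul_apply]
      rw [this]
    rw [h1, h2]
  -- the shift + power series ring hom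
  set σr : MvPolynomial (Fin d × Fin n) F →+* MvPolynomial (Fin d × Fin n) F :=
    (MvPolynomial.aeval (fun v : Fin d × Fin n =>
      MvPolynomial.X v + MvPolynomial.C (pt0 v))).toRingHom with hσr
  set ψ : MvPolynomial (Fin d × Fin n) F →+* MvPowerSeries (Fin d × Fin n) F :=
    (MvPolynomial.coeToMvPowerSeries.ringHom).comp σr with hψ
  have hconst : ∀ f : MvPolynomial (Fin d × Fin n) F,
      MvPowerSeries.constantCoeff (ψ f) = MvPolynomial.eval pt0 f := by
    intro f
    have hhom : ((MvPowerSeries.constantCoeff).comp ψ)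
        = (MvPolynomial.eval pt0 : MvPolynomial (Fin d × Fin n) F →+* F) := by
      apply MvPolynomial.ringHom_ext
      · intro a
        simp [hψ, hσr]
      · intro v
        simp [hψ, hσr]
    exact RingHom.congr_fun hhom f
  set Qs : MvPowerSeries (Fin d × Fin n) F := ψ (q : MvPolynomial (Fin d × Fin n) F) with hQs
  have hQconst : MvPowerSeries.constantCoeff Qs ≠ 0 := by
    rw [hQs, hconst]
    exact hpt0
  have hQinv : Qs⁻¹ * Qs = 1 := by
    rw [mul_comm]
    exact MvPowerSeries.mul_inv_cancel _ hQconst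
  set MW : Matrix (Fin m) (Fin m) (MvPowerSeries (Fin d × Fin n) F) := M.map ψ with hMW
  set Astar : Matrix (Fin m) (Fin r) (MvPowerSeries (Fin d × Fin n) F) :=
    Qs⁻¹ • ((Matrix.of A0).map ψ) with hAstar
  set Bstar : Matrix (Fin r) (Fin m) (MvPowerSeries (Fin d × Fin n) F) :=
    Qs⁻¹ • ((Matrix.of B0).map ψ) with hBstar
  have hMWfact : MW = Astar * Bstar := by
    have hWid : (Qs * Qs) • MW = ((Matrix.of A0).map ψ) * ((Matrix.of B0).map ψ) := by
      have h1 : ((((q : MvPolynomial (Fin d × Fin n) F) * q) • M)).map ψ = (Qs * Qs) • MW := by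
        ext p p'
        simp [Matrix.map_apply, Matrix.smul_apply, smul_eq_mul, _root_.map_mul, hQs, hMW]
      rw [← h1, hRid, Matrix.map_mul]
    rw [hAstar, hBstar, Matrix.smul_mul, Matrix.mul_smul, smul_smul, ← hWid, smul_smul]
    rw [show Qs⁻¹ * Qs⁻¹ * (Qs * Qs) = (Qs⁻¹ * Qs) * (Qs⁻¹ * Qs) by ring, hQinv, one_mul,
      one_smul]
  -- coefficient matrices
  set cA : ((Fin d × Fin n) →₀ ℕ) → Matrix (Fin m) (Fin r) F :=
    fun δ => Matrix.of fun p l => MvPowerSeries.coeff δ (Astar p l) with hcA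
  set cB : ((Fin d × Fin n) →₀ ℕ) → Matrix (Fin r) (Fin m) F :=
    fun δ => Matrix.of fun l p => MvPowerSeries.coeff δ (Bstar l p) with hcB
  -- coefficient of a product of matrices
  have hprodcoeff : ∀ δ : (Fin d × Fin n) →₀ ℕ,
      (Matrix.of fun p p' => MvPowerSeries.coeff δ (MW p p'))
        = ∑ pr ∈ Finset.HasAntidiagonal.antidiagonal δ, cA pr.1 * cB pr.2 := by
    intro δ
    ext p p'
    rw [Matrix.of_apply, hMWfact, Matrix.mul_apply, map_sum]
    rw [Finset.sum_congr rfl fun l _ => MvPowerSeries.coeff_mul δ _ _]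
    rw [Finset.sum_comm]
    rw [Matrix.sum_apply]
    exact Finset.sum_congr rfl fun pr _ => by
      rw [Matrix.mul_apply]
      exact Finset.sum_congr rfl fun l _ => by rw [hcA, hcB]; rfl
  -- the squarefree coefficients of MW recover L (e i)
  have hcoeffM : ∀ i : Fin d → Fin n,
      (Matrix.of fun p p' => MvPowerSeries.coeff
        (∑ k, Finsupp.single ((k, i k) : Fin d × Fin n) 1) (MW p p')) = L (e i) := by
    intro i
    ext p p'
    rw [Matrix.of_apply]
    have hentry : MW p p' = ψ (M p p') := rfl
    rw [hentry, hM]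
    have hMval : (Matrix.of fun p q => ∑ j : Fin d → Fin n,
        (∏ k, MvPolynomial.X ((k, j k) : Fin d × Fin n)) * MvPolynomial.C (L (e j) p q)) p p'
        = ∑ j : Fin d → Fin n,
          (∏ k, MvPolynomial.X ((k, j k) : Fin d × Fin n)) * MvPolynomial.C (L (e j) p p') := rfl
    rw [hMval, map_sum, map_sum]
    have hterm : ∀ jj : Fin d → Fin n,
        MvPowerSeries.coeff (∑ k, Finsupp.single ((k, i k) : Fin d × Fin n) 1)
          (ψ ((∏ k, MvPolynomial.X ((k, jj k) : Fin d × Fin n))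
            * MvPolynomial.C (L (e jj) p p')))
          = (if jj = i then 1 else 0) * (L (e jj) p p') := by
      intro jj
      rw [hψ, RingHom.comp_apply]
      have hcoe : ∀ g : MvPolynomial (Fin d × Fin n) F,
          MvPowerSeries.coeff (∑ k, Finsupp.single ((k, i k) : Fin d × Fin n) 1)
            (MvPolynomial.coeToMvPowerSeries.ringHom g)
          = MvPolynomial.coeff (∑ k, Finsupp.single ((k, i k) : Fin d × Fin n) 1) g :=
        fun g => MvPolynomial.coeff_coe g _
      rw [hcoe, _root_.map_mul]
      have hC : σr (MvPolynomial.C (L (e jj) p p')) = MvPolynomial.C (L (e jj) p p') := by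
        simp [hσr]
      have hmon : σr (∏ k, MvPolynomial.X ((k, jj k) : Fin d × Fin n))
          = ∏ k, (MvPolynomial.X ((k, jj k) : Fin d × Fin n)
              + MvPolynomial.C (pt0 (k, jj k))) := by
        rw [hσr]
        simp only [AlgHom.toRingHom_eq_coe, RingHom.coe_coe, map_prod, MvPolynomial.aeval_X]
      rw [hC, hmon, mul_comm _ (MvPolynomial.C (L (e jj) p p')), MvPolynomial.coeff_C_mul]
      rw [st_keycoeff i jj (fun k => pt0 (k, jj k)) Finset.univ]
      have hiff : (∀ k ∈ Finset.univ, jj k = i k) ↔ jj = i := by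
        constructor
        · intro h; funext k; exact h k (Finset.mem_univ k)
        · intro h k _; rw [h]
      rw [if_congr hiff rfl rfl, mul_comm]
    rw [Finset.sum_congr rfl fun jj _ => hterm jj]
    simp [ite_mul, Finset.sum_ite_eq']
  -- assemble L T
  set eps : (Fin d → Fin n) → Finset (Fin d) → ((Fin d × Fin n) →₀ ℕ) :=
    fun i S => ∑ k ∈ S, Finsupp.single ((k, i k) : Fin d × Fin n) 1 with hepsdef
  have hLe : ∀ i : Fin d → Fin n,
      L (e i) = ∑ S : Finset (Fin d), cA (eps i S) * cB (eps i Sᶜ) := by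
    intro i
    rw [← hcoeffM i, hprodcoeff]
    exact st_antidiag i (fun δ γ => cA δ * cB γ)
  have hLT : L T = ∑ S : Finset (Fin d), ∑ i, T i • (cA (eps i S) * cB (eps i Sᶜ)) := by
    rw [hTsum T]
    rw [Finset.sum_congr rfl fun i (_ : i ∈ Finset.univ) => by rw [hLe i, Finset.smul_sum]]
    rw [Finset.sum_comm]
  -- rank bounds per S
  have hGS : ∀ S : Finset (Fin d),
      (∑ i, T i • (cA (eps i S) * cB (eps i Sᶜ))).rank ≤ n ^ (d / 2) * r := by
    intro S
    have hb1 : (∑ i, T i • (cA (eps i S) * cB (eps i Sᶜ))).rank ≤ n ^ S.card * r := by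
      have hgr := st_rank_group
        (key := fun i : Fin d → Fin n => (fun k => if k ∈ S then i k else α₀ k : Fin d → Fin n))
        T (fun i => cA (eps i S)) (fun i => cB (eps i Sᶜ))
        (fun i i' hkey => by
          have : ∀ k ∈ S, i k = i' k := by
            intro k hk
            have := congrFun hkey k
            simpa [hk] using this
          show cA (eps i S) = cA (eps i' S)
          exact congrArg cA (st_eps_mask i i' S this))
      exact le_trans hgr (Nat.mul_le_mul_right r (st_card_mask α₀ S))
    have hb2 : (∑ i, T i • (cA (eps i S) * cB (eps i Sᶜ))).rank ≤ n ^ Sᶜ.card * r := by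
      have hgr := st_rank_group'
        (key := fun i : Fin d → Fin n => (fun k => if k ∈ Sᶜ then i k else α₀ k : Fin d → Fin n))
        T (fun i => cA (eps i S)) (fun i => cB (eps i Sᶜ))
        (fun i i' hkey => by
          have : ∀ k ∈ Sᶜ, i k = i' k := by
            intro k hk
            have := congrFun hkey k
            simpa [hk] using this
          show cB (eps i Sᶜ) = cB (eps i' Sᶜ)
          exact congrArg cB (st_eps_mask i i' Sᶜ this))
      exact le_trans hgr (Nat.mul_le_mul_right r (st_card_mask α₀ Sᶜ))
    have hSd : S.card ≤ d := by
      have := Finset.card_le_univ S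
      simpa using this
    have hcompl : Sᶜ.card = d - S.card := by
      rw [Finset.card_compl, Fintype.card_fin]
    rcases Nat.eq_zero_or_pos n with hn | hn
    · have hd : d = 0 := by
        by_contra hd0
        have : (0 : ℕ) < d := Nat.pos_of_ne_zero hd0
        have hF0 : Fin n := α₀ ⟨0, this⟩
        rw [hn] at hF0
        exact hF0.elim0
      have hS0 : S.card = 0 := by omega
      rw [hS0] at hb1
      have : d / 2 = 0 := by omega
      rw [this]
      exact hb1
    · by_cases hS : S.card ≤ d / 2
      · exact le_trans hb1 (Nat.mul_le_mul_right r (Nat.pow_le_pow_right hn hS))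
      · have hle : Sᶜ.card ≤ d / 2 := by omega
        exact le_trans hb2 (Nat.mul_le_mul_right r (Nat.pow_le_pow_right hn hle))
  calc (L T).rank
      = (∑ S : Finset (Fin d), ∑ i, T i • (cA (eps i S) * cB (eps i Sᶜ))).rank := by rw [hLT]
    _ ≤ ∑ S : Finset (Fin d), (∑ i, T i • (cA (eps i S) * cB (eps i Sᶜ))).rank :=
        st_rank_sum_le _ _
    _ ≤ ∑ _S : Finset (Fin d), n ^ (d / 2) * r := Finset.sum_le_sum fun S _ => hGS S
    _ = 2 ^ d * (n ^ (d / 2) * r) := by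
        rw [Finset.sum_const, Finset.card_univ, Fintype.card_finset, Fintype.card_fin,
          smul_eq_mul]
    _ = r * 2 ^ d * n ^ (d / 2) := by ring
end Main
theorem stmt15 (F : Type*) [Field F] [IsAlgClosed F] [CharZero F] (n m d r : ℕ)
    (L : ((Fin d → Fin n) → F) →ₗ[F] Matrix (Fin m) (Fin m) F)
    (hL : ∀ u : Fin d → Fin n → F,
      (L (fun j => ∏ k, u k (j k))).rank ≤ r) :
    ∀ T : (Fin d → Fin n) → F,
      (∀ (s : ℕ) (u : Fin s → Fin d → Fin n → F),
        T = (∑ i, fun j => ∏ k, u i k (j k)) → (L T).rank ≤ s * r) ∧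
      (L T).rank ≤ r * 2 ^ d * n ^ (d / 2) := by
  intro T
  constructor
  · intro s u hT
    rw [hT, map_sum]
    refine le_trans (st_rank_sum_le _ _) ?_
    refine le_trans (Finset.sum_le_sum fun i (_ : i ∈ Finset.univ) => hL (u i)) ?_
    simp [Finset.sum_const, mul_comm]
  · exact st_main n m d r L hL T
end
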